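/- arXiv:2210.16974 — 7 statements merged into one kernel-verified Lean document; each statement's English description precedes it below -/
import Mathlib

section
/- Let n ≥ 1, let v_1,…,v_m ∈ Sⁿ⁻¹ be pairwise distinct with positive integer weights μ_1,…,μ_m, and let u_1,…,u_k ∈ Sⁿ⁻¹ be pairwise distinct with k = μ_1 + … + μ_m; set μ = ∑ μ_i δ_{v_i} and λ = ∑ δ_{u_j}. Assume μ and λ are weak Aleksandrov related and μ is not concentrated on a closed hemisphere. If there is exactly one f ∈ 𝔽 maximizing the assignment functional A (i.e. there is f ∈ 𝔽 with A(g) < A(f) for every g ∈ 𝔽 with g ≠ f), then there exist α_1,…,α_m > 0 such that the polytope P = conv{α_1•v_1,…,α_m•v_m} contains 0 in its interior, μ = λ(P,·), and for every j ∈ {1,…,k} the vector u_j lies in the interior, relative to Sⁿ⁻¹, of the normal cone N(P, α_{f(j)}•v_{f(j)}). -/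
open MeasureTheory Set RealInnerProductSpace
open scoped ENNReal

noncomputable section

abbrev Euc (n : ℕ) := EuclideanSpace ℝ (Fin n)

/-- The unit sphere `S^{n-1}` in `ℝ^n`. -/
def uSphere (n : ℕ) : Set (Euc n) := Metric.sphere 0 1

/-- A convex body containing the origin in its interior (`K ∈ 𝒦ⁿ₀`). -/
def IsConvexBody0 {n : ℕ} (K : Set (Euc n)) : Prop :=
  IsCompact K ∧ Convex ℝ K ∧ (0 : Euc n) ∈ interior K

/-- The radial function `ρ_K(u) = sup {t > 0 : t • u ∈ K}`. -/
def radialFn {n : ℕ} (K : Set (Euc n)) (u : Euc n) : ℝ :=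
  sSup {t : ℝ | 0 < t ∧ t • u ∈ K}

/-- The normal cone of unit outer normals at `x`. -/
def normalCone {n : ℕ} (K : Set (Euc n)) (x : Euc n) : Set (Euc n) :=
  {w ∈ uSphere n | ∀ y ∈ K, ⟪y - x, w⟫ ≤ 0}

/-- The radial Gauss image `α_K(ω)`. -/
def gaussImage {n : ℕ} (K ω : Set (Euc n)) : Set (Euc n) :=
  ⋃ u ∈ ω, normalCone K (radialFn K u • u)

/-- The relation `μ = λ(K, ·)`: `λ(α_K(ω)) = μ(ω)` for every Borel `ω ⊆ S^{n-1}`,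
`λ` being applied as an outer measure. -/
def GaussRel {n : ℕ} (K : Set (Euc n)) (lam mu : Measure (Euc n)) : Prop :=
  ∀ ω : Set (Euc n), ω ⊆ uSphere n → MeasurableSet ω →
    lam (gaussImage K ω) = mu ω

/-- The cone generated by `ω`: `{t • u : t ≥ 0, u ∈ ω}`. -/
def coneOf {n : ℕ} (ω : Set (Euc n)) : Set (Euc n) :=
  {x | ∃ t : ℝ, 0 ≤ t ∧ ∃ u ∈ ω, x = t • u}

/-- `ω ⊆ S^{n-1}` is spherically convex. -/
def SphConvex {n : ℕ} (ω : Set (Euc n)) : Prop :=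
  ω ⊆ uSphere n ∧ (coneOf ω).Nonempty ∧ Convex ℝ (coneOf ω) ∧ coneOf ω ≠ univ

/-- The polar set `ω*`. -/
def polarSet {n : ℕ} (ω : Set (Euc n)) : Set (Euc n) :=
  {w ∈ uSphere n | ∀ u ∈ ω, ⟪u, w⟫ ≤ 0}

/-- The outer parallel set `ω_β`. -/
def outerPar {n : ℕ} (ω : Set (Euc n)) (β : ℝ) : Set (Euc n) :=
  {w ∈ uSphere n | ∃ u ∈ ω, Real.cos β < ⟪u, w⟫}

/-- `μ` and `λ` are weak Aleksandrov related. -/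
def WeakAleks {n : ℕ} (mu lam : Measure (Euc n)) : Prop :=
  mu (uSphere n) = lam (uSphere n) ∧
  ∀ ω : Set (Euc n), IsCompact ω → SphConvex ω →
    mu ω + lam (polarSet ω) ≤ mu (uSphere n)

/-- `log : ℝ → EReal` with `log x = -∞` for `x ≤ 0`. -/
def elog (x : ℝ) : EReal := if x ≤ 0 then ⊥ else ((Real.log x : ℝ) : EReal)

/-- Assignment functions `𝔽`: each fiber `f⁻¹(i)` has cardinality `μ_i`. -/
def IsAssign {k m : ℕ} (μw : Fin m → ℕ) (f : Fin k → Fin m) : Prop :=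
  ∀ i : Fin m, (Finset.univ.filter fun j => f j = i).card = μw i

/-- The assignment functional `A(f) = ∑_j log ⟨u_j, v_{f(j)}⟩`, valued in `EReal`. -/
def assignA {n k m : ℕ} (u : Fin k → Euc n) (v : Fin m → Euc n) (f : Fin k → Fin m) : EReal :=
  ∑ j : Fin k, elog ⟪u j, v (f j)⟫

/-- Interior of `s` relative to the unit sphere. -/
def sphInterior {n : ℕ} (s : Set (Euc n)) : Set (Euc n) :=
  {x ∈ uSphere n | ∃ ε > 0, ∀ y ∈ uSphere n, dist y x < ε → y ∈ s}

/-- `μ = ∑ μ_i δ_{v_i}` is not concentrated on a closed hemisphere. -/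
def NotHemisphere {n m : ℕ} (v : Fin m → Euc n) : Prop :=
  ¬ ∃ w ∈ uSphere n, ∀ i : Fin m, ⟪w, v i⟫ ≤ 0

/-- The discrete measure `∑ μ_i δ_{v_i}` with natural number weights. -/
def discMeasN {n m : ℕ} (μw : Fin m → ℕ) (v : Fin m → Euc n) : Measure (Euc n) :=
  ∑ i : Fin m, (μw i : ℝ≥0∞) • Measure.dirac (v i)

/-- The discrete measure `∑ μ_i δ_{v_i}` with positive real weights. -/
def discMeasR {n m : ℕ} (μw : Fin m → ℝ) (v : Fin m → Euc n) : Measure (Euc n) :=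
  ∑ i : Fin m, ENNReal.ofReal (μw i) • Measure.dirac (v i)

/-- The support function `h_K`. -/
def suppFn {n : ℕ} (K : Set (Euc n)) (w : Euc n) : ℝ :=
  sSup ((fun x => ⟪x, w⟫) '' K)

section PotentialSec

abbrev PEnc (m : ℕ) := Fin (m+1) × (Fin (m+1) → Fin m)

def Gx {m : ℕ} (x : PEnc m) (t : ℕ) : Fin m :=
  x.2 ⟨min t m, Nat.lt_succ_of_le (min_le_right t m)⟩

lemma Gx_min {m : ℕ} (x : PEnc m) (t : ℕ) (h : t ≤ m) :
    Gx x t = x.2 ⟨t, Nat.lt_succ_of_le h⟩ := by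
  simp [Gx, min_eq_left h]

def CycValid {m : ℕ} (E : Fin m → Fin m → Prop) (x : PEnc m) : Prop :=
  2 ≤ x.1.val ∧ (∀ s < x.1.val, ∀ t < x.1.val, Gx x s = Gx x t → s = t) ∧
    ∀ t < x.1.val, E (Gx x t) (Gx x ((t+1) % x.1.val))

def cval {m : ℕ} (a : Fin m → Fin m → ℝ) (x : PEnc m) : ℝ :=
  ∑ t ∈ Finset.range x.1.val, a (Gx x t) (Gx x ((t+1) % x.1.val))

def PathValid {m : ℕ} (E : Fin m → Fin m → Prop) (x : PEnc m) (i : Fin m) : Prop :=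
  Gx x x.1.val = i ∧ (∀ s ≤ x.1.val, ∀ t ≤ x.1.val, Gx x s = Gx x t → s = t) ∧
    ∀ t < x.1.val, E (Gx x t) (Gx x (t+1))

def psum {m : ℕ} (a : Fin m → Fin m → ℝ) (x : PEnc m) : ℝ :=
  ∑ t ∈ Finset.range x.1.val, a (Gx x t) (Gx x (t+1))

lemma pathvalid_le {m : ℕ} {E : Fin m → Fin m → Prop} {x : PEnc m} {i : Fin m}
    (h : PathValid E x i) : x.1.val + 1 ≤ m := by
  have hinj : Function.Injective (fun t : Fin (x.1.val + 1) => Gx x t.val) := by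
    intro s t hst
    exact Fin.ext (h.2.1 s.val (Nat.lt_succ_iff.mp s.isLt) t.val (Nat.lt_succ_iff.mp t.isLt) hst)
  simpa using Fintype.card_le_of_injective _ hinj

theorem exists_potential (m : ℕ) (hm : 0 < m) (E : Fin m → Fin m → Prop)
    (a : Fin m → Fin m → ℝ)
    (hcyc : ∀ (p : ℕ) (g : ℕ → Fin m), 2 ≤ p →
      (∀ s < p, ∀ t < p, g s = g t → s = t) → g p = g 0 →
      (∀ t < p, E (g t) (g (t+1))) →
      ∑ t ∈ Finset.range p, a (g t) (g (t+1)) < 0) :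
    ∃ β : Fin m → ℝ, ∀ i l, i ≠ l → E i l → a i l + β l < β i := by
  classical
  haveI : NeZero m := ⟨hm.ne'⟩
  -- every valid cycle is strictly negative
  have cyc_neg : ∀ x : PEnc m, CycValid E x → cval a x < 0 := by
    intro x hx
    obtain ⟨hp2, hinj, hE⟩ := hx
    set p := x.1.val with hp
    have := hcyc p (fun t => Gx x (t % p)) hp2
      (by
        intro s hs t ht h
        simp only [Nat.mod_eq_of_lt hs, Nat.mod_eq_of_lt ht] at h
        exact hinj s hs t ht h)
      (by simp [Nat.mod_self, Nat.zero_mod])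
      (by
        intro t ht
        simpa [Nat.mod_eq_of_lt ht] using hE t ht)
    calc cval a x = ∑ t ∈ Finset.range p, a (Gx x (t % p)) (Gx x ((t+1) % p)) := by
          apply Finset.sum_congr rfl
          intro t ht
          rw [Nat.mod_eq_of_lt (Finset.mem_range.mp ht)]
      _ < 0 := this
  -- cycle length bound
  have cyc_len : ∀ x : PEnc m, CycValid E x → x.1.val ≤ m := fun x _ => Nat.lt_succ_iff.mp x.1.isLt
  -- uniform gap
  have hne : (Finset.univ : Finset (PEnc m)).Nonempty := Finset.univ_nonempty
  set δ : ℝ := Finset.univ.inf' hne (fun x : PEnc m => if CycValid E x then -cval a x else 1) with hδ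
  have hδpos : 0 < δ := by
    rw [hδ, Finset.lt_inf'_iff]
    intro x _
    by_cases h : CycValid E x
    · simp only [h, if_true]
      linarith [cyc_neg x h]
    · simp [h]
  have hδle : ∀ x : PEnc m, CycValid E x → cval a x ≤ -δ := by
    intro x h
    have := Finset.inf'_le (f := fun x : PEnc m => if CycValid E x then -cval a x else 1)
      (b := x) (Finset.mem_univ x)
    rw [if_pos h] at this
    linarith [hδ ▸ this]
  set ε : ℝ := δ / (m + 1) with hε
  have hεpos : 0 < ε := by positivity
  set a' : Fin m → Fin m → ℝ := fun i l => a i l + ε with ha'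
  -- valid cycles strictly negative for a'
  have cyc_neg' : ∀ x : PEnc m, CycValid E x → cval a' x < 0 := by
    intro x hx
    have h1 : cval a' x = cval a x + x.1.val * ε := by
      simp [cval, ha', Finset.sum_add_distrib]
    have h2 : (x.1.val : ℝ) * ε ≤ m * ε :=
      mul_le_mul_of_nonneg_right (by exact_mod_cast cyc_len x hx) hεpos.le
    have h3 : (m : ℝ) * ε < δ := by
      rw [hε]
      rw [mul_div_assoc']
      rw [div_lt_iff₀ (by positivity)]
      nlinarith [hδpos]
    linarith [hδle x hx]
  -- path values
  set PV : Fin m → PEnc m → ℝ := fun i x => if PathValid E x i then psum a' x else 0 with hPV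
  set L : Fin m → ℝ := fun i => Finset.univ.sup' hne (PV i) with hL
  -- trivial path
  have triv : ∀ i : Fin m, ∃ x : PEnc m, PathValid E x i ∧ psum a' x = 0 := by
    intro i
    refine ⟨⟨⟨0, Nat.succ_pos m⟩, fun _ => i⟩, ⟨?_, ?_, ?_⟩, ?_⟩
    · simp [Gx]
    · intro s hs t ht _
      simp only [Nat.le_zero] at hs ht
      omega
    · intro t ht; simp at ht
    · simp [psum]
  have Lmax : ∀ i : Fin m, ∃ x : PEnc m, PathValid E x i ∧ psum a' x = L i := by
    intro i
    obtain ⟨x, _, hx⟩ := Finset.exists_mem_eq_sup' hne (PV i)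
    by_cases h : PathValid E x i
    · exact ⟨x, h, by simp only [hL]; rw [hx]; simp [hPV, h]⟩
    · obtain ⟨x0, h0, h0v⟩ := triv i
      refine ⟨x0, h0, ?_⟩
      have : L i = 0 := by simp only [hL]; rw [hx]; simp [hPV, h]
      rw [this, h0v]
  have Lge : ∀ i (x : PEnc m), PathValid E x i → psum a' x ≤ L i := by
    intro i x h
    have := Finset.le_sup' (PV i) (Finset.mem_univ x)
    simp only [hL]
    calc psum a' x = PV i x := by simp [hPV, h]
      _ ≤ _ := this
  -- key step
  have key : ∀ i l : Fin m, i ≠ l → E i l → L i + a' i l ≤ L l := by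
    intro i l hil hEil
    obtain ⟨x, hx, hxv⟩ := Lmax i
    obtain ⟨hend, hinj, hedge⟩ := hx
    set p := x.1.val with hp
    have hpm : p + 1 ≤ m := pathvalid_le ⟨hend, hinj, hedge⟩
    by_cases hmem : ∃ s ≤ p, Gx x s = l
    · -- cycle case
      obtain ⟨s, hs, hGs⟩ := hmem
      have hsp : s < p := by
        rcases lt_or_eq_of_le hs with h | h
        · exact h
        · exfalso; apply hil; rw [← hend, ← h, hGs]
      -- the cycle from s to p and back
      set P : ℕ := p - s with hPdef
      have hP1 : 1 ≤ P := by omega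
      have hsP : s + P = p := by omega
      set xc : PEnc m := (⟨P + 1, by omega⟩, fun t => Gx x (s + min t.val P)) with hxc
      have hGxc : ∀ t ≤ P, Gx xc t = Gx x (s + t) := by
        intro t ht
        rw [Gx_min xc t (by omega)]
        simp only [hxc]
        congr 1
        omega
      have hcv : CycValid E xc := by
        refine ⟨by simp [hxc]; omega, ?_, ?_⟩
        · intro s' hs' t' ht' h
          simp only [hxc] at hs' ht'
          rw [hGxc s' (by omega), hGxc t' (by omega)] at h
          have := hinj (s + s') (by omega) (s + t') (by omega) h
          omega
        · intro t ht
          simp only [hxc] at ht ⊢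
          have ht' : t < P + 1 := ht
          rw [hGxc t (by omega)]
          by_cases htP : t = P
          · have : (t + 1) % (P + 1) = 0 := by rw [htP]; simp
            rw [this, hGxc 0 (by omega), Nat.add_zero, htP, hsP, hend, hGs]
            exact hEil
          · have : (t + 1) % (P + 1) = t + 1 := Nat.mod_eq_of_lt (by omega)
            rw [this, hGxc (t+1) (by omega)]
            rw [← Nat.add_assoc]
            exact hedge (s + t) (by omega)
      have hcycsum : cval a' xc = (∑ t ∈ Finset.range P, a' (Gx x (s + t)) (Gx x (s + t + 1))) + a' i l := by
        have hxcval : xc.1.val = P + 1 := by simp [hxc]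
        rw [cval, hxcval, Finset.sum_range_succ]
        congr 1
        · apply Finset.sum_congr rfl
          intro t ht
          have ht' := Finset.mem_range.mp ht
          rw [hGxc t (by omega), Nat.mod_eq_of_lt (by omega), hGxc (t+1) (by omega), ← Nat.add_assoc]
        · rw [hGxc P le_rfl, hsP, hend, Nat.mod_self, hGxc 0 (by omega), Nat.add_zero, hGs]
      -- prefix path
      set xpre : PEnc m := (⟨s, by omega⟩, x.2) with hxpre
      have hGpre : ∀ t, Gx xpre t = Gx x t := fun t => rfl
      have hprev : PathValid E xpre l := by
        refine ⟨?_, ?_, ?_⟩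
        · rw [hGpre]; simpa [hxpre] using hGs
        · intro s' hs' t' ht' h
          simp only [hxpre] at hs' ht'
          rw [hGpre, hGpre] at h
          exact hinj s' (by omega) t' (by omega) h
        · intro t ht
          simp only [hxpre] at ht
          rw [hGpre, hGpre]
          exact hedge t (by omega)
      have hsplit : psum a' x = psum a' xpre + ∑ t ∈ Finset.range P, a' (Gx x (s + t)) (Gx x (s + t + 1)) := by
        rw [psum, psum, ← hp]
        have : p = s + P := by omega
        rw [this, Finset.sum_range_add]
        congr 1
      have hneg := cyc_neg' xc hcv
      have h1 : psum a' xpre ≤ L l := Lge l xpre hprev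
      -- combine
      have : L i + a' i l = psum a' xpre + cval a' xc := by
        rw [hcycsum, ← hxv, hsplit]; ring
      linarith
    · -- extension case
      push_neg at hmem
      have hpm2 : p + 2 ≤ m := by
        have hinj2 : Function.Injective (fun t : Fin (p + 2) =>
            if h : t.val ≤ p then Gx x t.val else l) := by
          intro s t hst
          by_cases hs : s.val ≤ p <;> by_cases ht : t.val ≤ p <;>
            simp only [hs, ht, dif_pos, dif_neg, not_true, not_false_iff] at hst
          · exact Fin.ext (hinj s.val hs t.val ht hst)
          · exact absurd hst (hmem s.val hs)
          · exact absurd hst.symm (hmem t.val ht)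
          · have : s.val = p + 1 := by omega
            have ht' : t.val = p + 1 := by omega
            exact Fin.ext (by omega)
        simpa using Fintype.card_le_of_injective _ hinj2
      set xe : PEnc m := (⟨p + 1, by omega⟩, fun t => if t.val ≤ p then Gx x t.val else l) with hxe
      have hGxe : ∀ t ≤ p + 1, Gx xe t = if t ≤ p then Gx x t else l := by
        intro t ht
        rw [Gx_min xe t (by omega)]
      have hval : PathValid E xe l := by
        refine ⟨?_, ?_, ?_⟩
        · rw [hGxe (p+1) le_rfl]; simp [hxe]
        · intro s' hs' t' ht' h
          simp only [hxe] at hs' ht'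
          rw [hGxe s' (by omega), hGxe t' (by omega)] at h
          by_cases h1 : s' ≤ p <;> by_cases h2 : t' ≤ p <;>
            simp only [h1, h2, if_pos, if_neg, not_true] at h
          · exact hinj s' h1 t' h2 h
          · exact absurd h (hmem s' h1)
          · exact absurd h.symm (hmem t' h2)
          · omega
        · intro t ht
          simp only [hxe] at ht
          rw [hGxe t (by omega), hGxe (t+1) (by omega)]
          by_cases h1 : t + 1 ≤ p
          · rw [if_pos (by omega), if_pos h1]
            exact hedge t (by omega)
          · have : t = p := by omega
            rw [if_pos (by omega), if_neg h1, this, hend]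
            exact hEil
      have hsum : psum a' xe = psum a' x + a' i l := by
        have hxev : xe.1.val = p + 1 := by simp [hxe]
        rw [psum, hxev, Finset.sum_range_succ]
        congr 1
        · rw [psum, ← hp]
          apply Finset.sum_congr rfl
          intro t ht
          have ht' := Finset.mem_range.mp ht
          rw [hGxe t (by omega), hGxe (t+1) (by omega), if_pos (by omega), if_pos (by omega)]
        · rw [hGxe p (by omega), hGxe (p+1) le_rfl, if_pos le_rfl, if_neg (by omega), hend]
      have := Lge l xe hval
      rw [hsum, hxv] at this
      exact this
  refine ⟨fun i => -L i, ?_⟩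
  intro i l hil hEil
  have h1 := key i l hil hEil
  simp only [ha'] at h1
  show a i l + -L l < -L i
  linarith

end PotentialSec

-- ===== helpers =====

lemma ereal_coe_sum {ι : Type*} (s : Finset ι) (f : ι → ℝ) :
    ((∑ j ∈ s, f j : ℝ) : EReal) = ∑ j ∈ s, ((f j : ℝ) : EReal) := by
  induction s using Finset.cons_induction with
  | empty => simp
  | cons a s ha ih => rw [Finset.sum_cons, Finset.sum_cons, EReal.coe_add, ih]

lemma elog_pos {x : ℝ} (hx : 0 < x) : elog x = ((Real.log x : ℝ) : EReal) := by
  rw [elog, if_neg (not_le.mpr hx)]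

lemma isAssign_comp_perm {k m : ℕ} (μw : Fin m → ℕ) (f : Fin k → Fin m) (hf : IsAssign μw f)
    (σ : Equiv.Perm (Fin k)) : IsAssign μw (fun j => f (σ j)) := by
  classical
  intro i
  have : Finset.univ.filter (fun j => f (σ j) = i)
      = (Finset.univ.filter (fun j => f j = i)).map σ.symm.toEmbedding := by
    ext j
    simp only [Finset.mem_filter, Finset.mem_univ, true_and, Finset.mem_map,
      Equiv.coe_toEmbedding, Equiv.symm_apply_eq]
    constructor
    · intro h; exact ⟨σ j, h, rfl⟩
    · rintro ⟨x, hx, rfl⟩; exact hx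
  rw [this, Finset.card_map]; exact hf i

lemma assignA_pos_eq {n k m : ℕ} (u : Fin k → Euc n) (v : Fin m → Euc n) (f : Fin k → Fin m)
    (h : ∀ j, 0 < ⟪u j, v (f j)⟫) :
    assignA u v f = ((∑ j : Fin k, Real.log ⟪u j, v (f j)⟫ : ℝ) : EReal) := by
  rw [assignA, ereal_coe_sum]
  exact Finset.sum_congr rfl fun j _ => elog_pos (h j)

theorem exists_alpha_strict {n m k : ℕ} (hm : 2 ≤ m)
    (v : Fin m → Euc n) (u : Fin k → Euc n) (f : Fin k → Fin m)
    (μw : Fin m → ℕ) (hf : IsAssign μw f)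
    (hmax : ∀ g : Fin k → Fin m, IsAssign μw g → g ≠ f →
      assignA u v g < assignA u v f)
    (hpos : ∀ j, 0 < ⟪u j, v (f j)⟫) :
    ∃ α : Fin m → ℝ, (∀ i, 0 < α i) ∧
      ∀ j l, l ≠ f j → α l * ⟪u j, v l⟫ < α (f j) * ⟪u j, v (f j)⟫ := by
  classical
  set D : Fin k → Fin m → ℝ := fun j l => Real.log ⟪u j, v l⟫ - Real.log ⟪u j, v (f j)⟫ with hD
  set fib : Fin m → Fin m → Finset (Fin k) :=
    fun i l => Finset.univ.filter (fun j => f j = i ∧ 0 < ⟪u j, v l⟫) with hfib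
  set E : Fin m → Fin m → Prop := fun i l => (fib i l).Nonempty with hE
  set a : Fin m → Fin m → ℝ := fun i l =>
    if h : (fib i l).Nonempty then (fib i l).sup' h (fun j => D j l) else 0 with ha
  have achieve : ∀ i l, E i l → ∃ j, f j = i ∧ 0 < ⟪u j, v l⟫ ∧ a i l = D j l := by
    intro i l h
    obtain ⟨j, hj, hj2⟩ := Finset.exists_mem_eq_sup' h (fun j => D j l)
    simp only [hfib, Finset.mem_filter, Finset.mem_univ, true_and] at hj
    exact ⟨j, hj.1, hj.2, by rw [ha]; simp only [dif_pos h]; exact (dif_pos h).trans hj2⟩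
  have abound : ∀ j l, 0 < ⟪u j, v l⟫ → D j l ≤ a (f j) l := by
    intro j l hjl
    have hjmem : j ∈ fib (f j) l :=
      Finset.mem_filter.mpr ⟨Finset.mem_univ j, rfl, hjl⟩
    have hne : (fib (f j) l).Nonempty := ⟨j, hjmem⟩
    rw [ha]; simp only [dif_pos hne]
    exact Finset.le_sup' (fun j => D j l) hjmem
  -- the cycle condition
  have hcyc : ∀ (p : ℕ) (g : ℕ → Fin m), 2 ≤ p →
      (∀ s < p, ∀ t < p, g s = g t → s = t) → g p = g 0 →
      (∀ t < p, E (g t) (g (t+1))) →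
      ∑ t ∈ Finset.range p, a (g t) (g (t+1)) < 0 := by
    intro p g hp2 hinj hgp hedge
    -- choose witnesses
    have hJex : ∀ t, t < p → ∃ j : Fin k, f j = g t ∧ 0 < ⟪u j, v (g (t+1))⟫ ∧
        a (g t) (g (t+1)) = D j (g (t+1)) := fun t ht => achieve _ _ (hedge t ht)
    have hk0 : Nonempty (Fin k) := by
      obtain ⟨j, _, _, _⟩ := hJex 0 (by omega); exact ⟨j⟩
    set J : ℕ → Fin k := fun t => if h : t < p then (hJex t h).choose else Classical.choice hk0
      with hJ
    have hJf : ∀ t < p, f (J t) = g t := by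
      intro t ht; simp only [hJ, dif_pos ht]; exact (hJex t ht).choose_spec.1
    have hJpos : ∀ t < p, 0 < ⟪u (J t), v (g (t+1))⟫ := by
      intro t ht; simp only [hJ, dif_pos ht]; exact (hJex t ht).choose_spec.2.1
    have hJa : ∀ t < p, a (g t) (g (t+1)) = D (J t) (g (t+1)) := by
      intro t ht; simp only [hJ, dif_pos ht]; exact (hJex t ht).choose_spec.2.2
    have hJinj : ∀ s < p, ∀ t < p, J s = J t → s = t := by
      intro s hs t ht h
      exact hinj s hs t ht (by rw [← hJf s hs, ← hJf t ht, h])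
    -- the cyclic permutation
    set Lst : List (Fin k) := (List.range p).map J with hLst
    have hLlen : Lst.length = p := by simp [hLst]
    have hLnd : Lst.Nodup := by
      apply List.Nodup.map_on _ (List.nodup_range (n := p))
      intro s hs t ht h
      exact hJinj s (List.mem_range.mp hs) t (List.mem_range.mp ht) h
    set σ : Equiv.Perm (Fin k) := Lst.formPerm with hσ
    have hσJ : ∀ t < p, σ (J t) = J ((t+1) % p) := by
      intro t ht
      have ht' : t < Lst.length := by omega
      have h1 := List.formPerm_apply_getElem Lst hLnd t ht'
      simp only [hLst, List.getElem_map, List.getElem_range, List.length_map,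
        List.length_range] at h1
      exact h1
    have hmem : ∀ j : Fin k, j ∈ Lst ↔ ∃ t < p, J t = j := by
      intro j; simp [hLst, List.mem_map, List.mem_range]
    have hσfix : ∀ j : Fin k, (¬ ∃ t < p, J t = j) → σ j = j := by
      intro j hj
      exact List.formPerm_apply_of_notMem (by rw [hmem]; exact hj)
    -- the new assignment
    set g' : Fin k → Fin m := fun j => f (σ j) with hg'
    have hg'assign : IsAssign μw g' := isAssign_comp_perm μw f hf σ
    have hg'val : ∀ t < p, g' (J t) = g ((t+1) % p) := by
      intro t ht
      simp only [hg']
      rw [hσJ t ht, hJf _ (Nat.mod_lt _ (by omega))]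
    have hg'ne : g' ≠ f := by
      intro h
      have h0 : g' (J 0) = g (1 % p) := hg'val 0 (by omega)
      rw [Nat.mod_eq_of_lt (by omega)] at h0
      have h1 : f (J 0) = g 0 := hJf 0 (by omega)
      rw [h] at h0
      rw [h1] at h0
      exact absurd (hinj 0 (by omega) 1 (by omega) h0) (by omega)
    have hgmod : ∀ t < p, g ((t+1) % p) = g (t+1) := by
      intro t ht
      by_cases htp : t + 1 < p
      · rw [Nat.mod_eq_of_lt htp]
      · have h1 : t + 1 = p := by omega
        rw [h1, Nat.mod_self, ← hgp]
    have hg'pos : ∀ j, 0 < ⟪u j, v (g' j)⟫ := by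
      intro j
      by_cases hjmem : ∃ t < p, J t = j
      · obtain ⟨t, ht, rfl⟩ := hjmem
        rw [hg'val t ht, hgmod t ht]
        exact hJpos t ht
      · simp only [hg', hσfix j hjmem]; exact hpos j
    -- compare sums
    have hlt := hmax g' hg'assign hg'ne
    rw [assignA_pos_eq u v g' hg'pos, assignA_pos_eq u v f hpos, EReal.coe_lt_coe_iff] at hlt
    set T : Finset (Fin k) := (Finset.range p).image J with hT
    have hTmem : ∀ j, j ∈ T ↔ ∃ t < p, J t = j := by
      intro j; simp [hT, Finset.mem_image, Finset.mem_range]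
    have hsum : ∑ t ∈ Finset.range p, a (g t) (g (t+1))
        = ∑ j : Fin k, (Real.log ⟪u j, v (g' j)⟫ - Real.log ⟪u j, v (f j)⟫) := by
      have hvan : ∀ x ∈ Finset.univ, x ∉ T →
          Real.log ⟪u x, v (g' x)⟫ - Real.log ⟪u x, v (f x)⟫ = 0 := by
        intro j _ hj
        rw [hTmem] at hj
        simp only [hg', hσfix j hj, sub_self]
      have hIm : ∀ x ∈ Finset.range p, ∀ y ∈ Finset.range p, J x = J y → x = y := by
        intro x hx y hy h
        exact hJinj x (Finset.mem_range.mp hx) y (Finset.mem_range.mp hy) h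
      rw [← Finset.sum_subset (Finset.subset_univ T) hvan, hT, Finset.sum_image hIm]
      apply Finset.sum_congr rfl
      intro t ht
      have ht' := Finset.mem_range.mp ht
      rw [hJa t ht']
      simp only [hD]
      rw [hg'val t ht', hJf t ht', hgmod t ht']
    rw [hsum, Finset.sum_sub_distrib]
    exact sub_neg.mpr hlt
  -- apply the potential lemma
  obtain ⟨β, hβ⟩ := exists_potential m (by omega) E a hcyc
  refine ⟨fun i => Real.exp (β i), fun i => Real.exp_pos _, ?_⟩
  intro j l hl
  show Real.exp (β l) * ⟪u j, v l⟫ < Real.exp (β (f j)) * ⟪u j, v (f j)⟫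
  by_cases hjl : 0 < ⟪u j, v l⟫
  · have hEfl : E (f j) l := ⟨j, Finset.mem_filter.mpr ⟨Finset.mem_univ j, rfl, hjl⟩⟩
    have h1 := hβ (f j) l (Ne.symm hl) hEfl
    have h2 := abound j l hjl
    have h3 : Real.log ⟪u j, v l⟫ + β l < Real.log ⟪u j, v (f j)⟫ + β (f j) := by
      simp only [hD] at h2; linarith
    have h4 := Real.exp_lt_exp.mpr h3
    rw [Real.exp_add, Real.exp_add, Real.exp_log hjl, Real.exp_log (hpos j)] at h4
    calc Real.exp (β l) * ⟪u j, v l⟫ = ⟪u j, v l⟫ * Real.exp (β l) := mul_comm _ _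
      _ < ⟪u j, v (f j)⟫ * Real.exp (β (f j)) := h4
      _ = Real.exp (β (f j)) * ⟪u j, v (f j)⟫ := mul_comm _ _
  · have hle : Real.exp (β l) * ⟪u j, v l⟫ ≤ 0 :=
      mul_nonpos_iff.mpr (Or.inl ⟨(Real.exp_pos _).le, not_lt.mp hjl⟩)
    have hgt : 0 < Real.exp (β (f j)) * ⟪u j, v (f j)⟫ := mul_pos (Real.exp_pos _) (hpos j)
    linarith



open scoped Classical in
lemma discMeasN_apply {n m : ℕ} (μw : Fin m → ℕ) (v : Fin m → Euc n) (S : Set (Euc n)) :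
    discMeasN μw v S = ∑ i : Fin m, (μw i : ℝ≥0∞) * (if v i ∈ S then 1 else 0) := by
  classical
  rw [discMeasN]
  have h1 : (∑ i : Fin m, (μw i : ℝ≥0∞) • MeasureTheory.Measure.dirac (v i)) S
      = ∑ i : Fin m, ((μw i : ℝ≥0∞) • MeasureTheory.Measure.dirac (v i)) S := by
    rw [MeasureTheory.Measure.coe_finset_sum, Finset.sum_apply]
  rw [h1]
  apply Finset.sum_congr rfl
  intro i _
  rw [MeasureTheory.Measure.smul_apply, MeasureTheory.Measure.dirac_apply, smul_eq_mul]
  simp [Set.indicator_apply]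


theorem geom_main {n m k : ℕ} (hm : 2 ≤ m)
    (v : Fin m → Euc n) (u : Fin k → Euc n)
    (hv : ∀ i, v i ∈ uSphere n) (hu : ∀ j, u j ∈ uSphere n)
    (hvinj : Function.Injective v)
    (μw : Fin m → ℕ) (f : Fin k → Fin m) (hf : IsAssign μw f) (hμw : ∀ i, 0 < μw i)
    (hNH : NotHemisphere v)
    (α : Fin m → ℝ) (hαpos : ∀ i, 0 < α i)
    (hpos : ∀ j, 0 < ⟪u j, v (f j)⟫)
    (hstrict : ∀ j l, l ≠ f j → α l * ⟪u j, v l⟫ < α (f j) * ⟪u j, v (f j)⟫) :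
    (0 : Euc n) ∈ interior (convexHull ℝ (Set.range fun i => α i • v i)) ∧
      GaussRel (convexHull ℝ (Set.range fun i => α i • v i))
        (discMeasN (fun _ : Fin k => 1) u) (discMeasN μw v) ∧
      ∀ j : Fin k, u j ∈ sphInterior (normalCone
        (convexHull ℝ (Set.range fun i => α i • v i)) (α (f j) • v (f j))) := by
  classical
  haveI : Nontrivial (Fin m) := Fin.nontrivial_iff_two_le.mpr hm
  set x : Fin m → Euc n := fun i => α i • v i with hx
  set P : Set (Euc n) := convexHull ℝ (Set.range x) with hP
  have hm0 : 0 < m := by omega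
  have hvnorm : ∀ i, ‖v i‖ = 1 := by
    intro i; have := hv i; rwa [uSphere, mem_sphere_zero_iff_norm] at this
  have hunorm : ∀ j, ‖u j‖ = 1 := by
    intro j; have := hu j; rwa [uSphere, mem_sphere_zero_iff_norm] at this
  have hxu : ∀ (j : Fin k) (i : Fin m), ⟪x i, u j⟫ = α i * ⟪u j, v i⟫ := by
    intro j i
    rw [hx]
    simp only [real_inner_smul_left]
    rw [real_inner_comm]
  have hfib : ∀ i : Fin m, ∃ j, f j = i := by
    intro i
    have h1 : 0 < (Finset.univ.filter fun j => f j = i).card := by rw [hf i]; exact hμw i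
    obtain ⟨j, hj⟩ := Finset.card_pos.mp h1
    exact ⟨j, (Finset.mem_filter.mp hj).2⟩
  have hxP : ∀ i, x i ∈ P := fun i => subset_convexHull ℝ _ ⟨i, rfl⟩
  have hPconv : Convex ℝ P := convex_convexHull ℝ _
  have hPcpt : IsCompact P := (Set.finite_range x).isCompact_convexHull (𝕜 := ℝ)
  have hPclosed : IsClosed P := hPcpt.isClosed
  have hlin' : ∀ y : Euc n, IsLinearMap ℝ (fun p : Euc n => ⟪p, y⟫) := by
    intro y
    exact ⟨fun a b => inner_add_left a b _, fun c a => real_inner_smul_left a _ c⟩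
  have hlin : ∀ j : Fin k, IsLinearMap ℝ (fun p : Euc n => ⟪p, u j⟫) := fun j => hlin' (u j)
  have hhalf : ∀ j : Fin k, ∀ p ∈ P, ⟪p, u j⟫ ≤ ⟪x (f j), u j⟫ := by
    intro j
    have hsub : Set.range x ⊆ {p : Euc n | ⟪p, u j⟫ ≤ ⟪x (f j), u j⟫} := by
      rintro _ ⟨i, rfl⟩
      by_cases hi : i = f j
      · simp [hi]
      · have h1 := hstrict j i hi
        simp only [Set.mem_setOf_eq, hxu]
        linarith
    exact fun p hp => convexHull_min hsub (convex_halfSpace_le (hlin j) _) hp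
  have hMpos : ∀ j, 0 < ⟪x (f j), u j⟫ := by
    intro j
    rw [hxu]
    exact mul_pos (hαpos (f j)) (hpos j)
  have hstrictP : ∀ j : Fin k, ∀ p ∈ P, p ≠ x (f j) → ⟪p, u j⟫ < ⟪x (f j), u j⟫ := by
    intro j p hp hne
    obtain ⟨i1, hi1⟩ := exists_ne (f j)
    set s : Set (Euc n) := x '' {i | i ≠ f j} with hs
    have hsne : s.Nonempty := ⟨x i1, i1, hi1, rfl⟩
    have hrange : Set.range x = insert (x (f j)) s := by
      ext q
      constructor
      · rintro ⟨i, rfl⟩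
        by_cases hi : i = f j
        · rw [hi]; exact Set.mem_insert _ _
        · exact Set.mem_insert_of_mem _ ⟨i, hi, rfl⟩
      · rintro (rfl | ⟨i, _, rfl⟩)
        · exact ⟨f j, rfl⟩
        · exact ⟨i, rfl⟩
    have hfilne : (Finset.univ.filter (· ≠ f j)).Nonempty :=
      ⟨i1, Finset.mem_filter.mpr ⟨Finset.mem_univ _, hi1⟩⟩
    set M' : ℝ := (Finset.univ.filter (· ≠ f j)).sup' hfilne (fun i => ⟪x i, u j⟫) with hM'
    have hM'lt : M' < ⟪x (f j), u j⟫ := by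
      rw [hM', Finset.sup'_lt_iff]
      intro i hi
      have hi' : i ≠ f j := (Finset.mem_filter.mp hi).2
      have h1 := hstrict j i hi'
      rw [hxu, hxu]
      linarith
    have hM'bd : ∀ q ∈ convexHull ℝ s, ⟪q, u j⟫ ≤ M' := by
      intro q hq
      refine convexHull_min ?_ (convex_halfSpace_le (hlin j) _) hq
      rintro _ ⟨i, hi, rfl⟩
      exact Finset.le_sup' (fun i => ⟪x i, u j⟫) (Finset.mem_filter.mpr ⟨Finset.mem_univ _, hi⟩)
    rw [hP, hrange, convexHull_insert hsne, mem_convexJoin] at hp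
    obtain ⟨b, hb, c, hc, hseg⟩ := hp
    rw [Set.mem_singleton_iff] at hb
    subst hb
    obtain ⟨t1, t2, ht1, ht2, hts, rfl⟩ := hseg
    have hcle := hM'bd c hc
    by_cases ht20 : t2 = 0
    · exfalso
      apply hne
      have ht11 : t1 = 1 := by linarith
      rw [ht20, ht11]
      simp
    · have ht2p : 0 < t2 := lt_of_le_of_ne ht2 (Ne.symm ht20)
      have hinner : ⟪t1 • x (f j) + t2 • c, u j⟫ = t1 * ⟪x (f j), u j⟫ + t2 * ⟪c, u j⟫ := by
        simp only [inner_add_left, real_inner_smul_left]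
      rw [hinner]
      have h9 : t2 * ⟪c, u j⟫ < t2 * ⟪x (f j), u j⟫ :=
        mul_lt_mul_of_pos_left (lt_of_le_of_lt hcle hM'lt) ht2p
      have h10 : t1 * ⟪x (f j), u j⟫ + t2 * ⟪x (f j), u j⟫ = ⟪x (f j), u j⟫ := by
        rw [← add_mul, hts, one_mul]
      linarith
  have hball : ∃ δ > 0, Metric.ball (0 : Euc n) δ ⊆ P := by
    by_contra hc
    push_neg at hc
    set i0 : Fin m := ⟨0, hm0⟩ with hi0
    have hY : ∀ nn : ℕ, ∃ y : Euc n, ‖y‖ < 1/(nn+1) ∧ y ∉ P := by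
      intro nn
      have h1 := hc (1/(nn+1)) (by positivity)
      rw [Set.not_subset] at h1
      obtain ⟨y, hy1, hy2⟩ := h1
      refine ⟨y, ?_, hy2⟩
      rwa [Metric.mem_ball, dist_zero_right] at hy1
    choose Y hY1 hY2 using hY
    have hW : ∀ nn : ℕ, ∃ w : Euc n, ‖w‖ = 1 ∧ ∀ i, ⟪w, x i⟫ ≤ 1/(nn+1) := by
      intro nn
      obtain ⟨φ, cst, hφ1, hφ2⟩ := geometric_hahn_banach_closed_point hPconv hPclosed (hY2 nn)
      set z := (InnerProductSpace.toDual ℝ (Euc n)).symm φ with hz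
      have hzeq : ∀ y : Euc n, ⟪z, y⟫ = φ y := by
        intro y; rw [hz]; exact InnerProductSpace.toDual_symm_apply
      have hz0 : z ≠ 0 := by
        intro h0
        have h1 := hφ1 (x i0) (hxP i0)
        have h2 := hφ2
        rw [← hzeq] at h1 h2
        rw [h0] at h1 h2
        simp only [inner_zero_left] at h1 h2
        linarith
      have hzpos : 0 < ‖z‖ := norm_pos_iff.mpr hz0
      refine ⟨‖z‖⁻¹ • z, ?_, ?_⟩
      · rw [norm_smul, norm_inv, norm_norm, inv_mul_cancel₀ (norm_ne_zero_iff.mpr hz0)]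
      · intro i
        have h1 : φ (x i) < cst := hφ1 (x i) (hxP i)
        have h2 : cst < φ (Y nn) := hφ2
        have h3 : ⟪z, Y nn⟫ ≤ ‖z‖ * ‖Y nn‖ := real_inner_le_norm _ _
        have h4 : ‖Y nn‖ ≤ 1/(nn+1) := (hY1 nn).le
        rw [← hzeq] at h1 h2
        rw [real_inner_smul_left]
        have h5 : ⟪z, x i⟫ ≤ ‖z‖ * (1/(nn+1)) := by nlinarith
        calc ‖z‖⁻¹ * ⟪z, x i⟫ ≤ ‖z‖⁻¹ * (‖z‖ * (1/(nn+1))) :=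
              mul_le_mul_of_nonneg_left h5 (inv_nonneg.mpr hzpos.le)
          _ = 1/(nn+1) := by
              rw [← mul_assoc, inv_mul_cancel₀ (norm_ne_zero_iff.mpr hz0), one_mul]
    choose W hW1 hW2 using hW
    have hWs : ∀ nn, W nn ∈ Metric.sphere (0 : Euc n) 1 := by
      intro nn; rw [mem_sphere_zero_iff_norm]; exact hW1 nn
    obtain ⟨w, hwmem, φs, hφmono, hφtend⟩ :=
      (isCompact_sphere (0 : Euc n) 1).tendsto_subseq hWs
    have hwx : ∀ i, ⟪w, x i⟫ ≤ 0 := by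
      intro i
      have htend1 : Filter.Tendsto (fun nn => ⟪W (φs nn), x i⟫) Filter.atTop (nhds ⟪w, x i⟫) :=
        Filter.Tendsto.inner hφtend tendsto_const_nhds
      have htend2 : Filter.Tendsto (fun nn : ℕ => 1/((φs nn : ℝ)+1)) Filter.atTop (nhds 0) :=
        tendsto_one_div_add_atTop_nhds_zero_nat.comp hφmono.tendsto_atTop
      exact le_of_tendsto_of_tendsto htend1 htend2
        (Filter.Eventually.of_forall fun nn => hW2 (φs nn) i)
    apply hNH
    refine ⟨w, hwmem, fun i => ?_⟩
    have h1 := hwx i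
    rw [hx] at h1
    simp only [real_inner_smul_right] at h1
    by_contra hcc
    push_neg at hcc
    nlinarith [hαpos i]
  have hρ : ∀ i, radialFn P (v i) = α i := by
    intro i
    obtain ⟨j, hj⟩ := hfib i
    have hip : 0 < ⟪u j, v i⟫ := by rw [← hj]; exact hpos j
    have hαmem : α i ∈ {t : ℝ | 0 < t ∧ t • v i ∈ P} := ⟨hαpos i, hxP i⟩
    have hbdd : ∀ t ∈ {t : ℝ | 0 < t ∧ t • v i ∈ P}, t ≤ α i := by
      rintro t ⟨_, htP⟩
      have h1 := hhalf j _ htP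
      have h2 : ⟪t • v i, u j⟫ = t * ⟪u j, v i⟫ := by
        rw [real_inner_smul_left, real_inner_comm]
      have h3 : ⟪x (f j), u j⟫ = α i * ⟪u j, v i⟫ := by rw [hxu, hj]
      rw [h2, h3] at h1
      exact le_of_mul_le_mul_right h1 hip
    exact le_antisymm (csSup_le ⟨α i, hαmem⟩ hbdd) (le_csSup ⟨α i, hbdd⟩ hαmem)
  have hradmem : ∀ w ∈ uSphere n, radialFn P w • w ∈ P ∧ 0 < radialFn P w := by
    intro w hw
    obtain ⟨δ, hδp, hδsub⟩ := hball
    have hwn : ‖w‖ = 1 := by rwa [uSphere, mem_sphere_zero_iff_norm] at hw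
    set T := {t : ℝ | 0 < t ∧ t • w ∈ P} with hT
    have hrad : radialFn P w = sSup T := rfl
    have hTne : (δ/2) ∈ T := by
      refine ⟨by positivity, hδsub ?_⟩
      rw [Metric.mem_ball, dist_zero_right, norm_smul, hwn, mul_one, Real.norm_eq_abs,
        abs_of_pos (by positivity)]
      linarith
    obtain ⟨R, hR⟩ := hPcpt.isBounded.subset_closedBall (0 : Euc n)
    have hTbdd : BddAbove T := by
      refine ⟨R, fun t ht => ?_⟩
      have h1 := hR ht.2
      rwa [Metric.mem_closedBall, dist_zero_right, norm_smul, hwn, mul_one, Real.norm_eq_abs,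
        abs_of_pos ht.1] at h1
    have hsup_pos : 0 < radialFn P w := by
      rw [hrad]
      calc (0:ℝ) < δ/2 := by positivity
        _ ≤ sSup T := le_csSup hTbdd hTne
    refine ⟨?_, hsup_pos⟩
    obtain ⟨seq, hmono, htend, hmem⟩ := exists_seq_tendsto_sSup ⟨_, hTne⟩ hTbdd
    have htend2 : Filter.Tendsto (fun nn => seq nn • w) Filter.atTop
        (nhds (radialFn P w • w)) := by
      rw [hrad]
      exact htend.smul_const w
    exact hPclosed.mem_of_tendsto htend2 (Filter.Eventually.of_forall fun nn => (hmem nn).2)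
  have hNC1 : ∀ j, u j ∈ normalCone P (x (f j)) := by
    intro j
    refine ⟨hu j, fun y hy => ?_⟩
    rw [inner_sub_left]
    linarith [hhalf j y hy]
  have hNC2 : ∀ (j : Fin k) (w : Euc n), w ∈ uSphere n →
      u j ∈ normalCone P (radialFn P w • w) → w = v (f j) := by
    intro j w hw hmem
    obtain ⟨hquP, hρpos⟩ := hradmem w hw
    have h1 : ⟪x (f j), u j⟫ ≤ ⟪radialFn P w • w, u j⟫ := by
      have h2 := hmem.2 (x (f j)) (hxP (f j))
      rw [inner_sub_left] at h2
      linarith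
    have hqeq : radialFn P w • w = x (f j) := by
      by_contra hne
      have h3 := hstrictP j _ hquP hne
      linarith
    have hwn : ‖w‖ = 1 := by rwa [uSphere, mem_sphere_zero_iff_norm] at hw
    have hnorm : radialFn P w = α (f j) := by
      have h3 := congrArg norm hqeq
      rwa [norm_smul, hx, norm_smul, hwn, hvnorm (f j), mul_one, mul_one, Real.norm_eq_abs,
        Real.norm_eq_abs, abs_of_pos hρpos, abs_of_pos (hαpos (f j))] at h3
    have h4 : α (f j) • w = α (f j) • v (f j) := by
      rw [← hnorm, hqeq, hx]
      rw [hnorm]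
    exact smul_right_injective (Euc n) (ne_of_gt (hαpos (f j))) h4
  refine ⟨?_, ?_, ?_⟩
  · -- interior
    obtain ⟨δ, hδ, hsub⟩ := hball
    apply interior_mono hsub
    rw [Metric.isOpen_ball.interior_eq]
    exact Metric.mem_ball_self hδ
  · -- GaussRel
    intro ω hωsub hωmeas
    have hiff : ∀ j, u j ∈ gaussImage P ω ↔ v (f j) ∈ ω := by
      intro j
      constructor
      · intro hmem
        rw [gaussImage, Set.mem_iUnion₂] at hmem
        obtain ⟨w, hwω, hwN⟩ := hmem
        have h1 := hNC2 j w (hωsub hwω) hwN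
        rwa [← h1]
      · intro hmem
        rw [gaussImage, Set.mem_iUnion₂]
        refine ⟨v (f j), hmem, ?_⟩
        have h1 : radialFn P (v (f j)) • v (f j) = x (f j) := by rw [hρ, hx]
        rw [h1]
        exact hNC1 j
    rw [discMeasN_apply, discMeasN_apply]
    have hL : ∀ j : Fin k, ((1:ℕ) : ℝ≥0∞) * (if u j ∈ gaussImage P ω then 1 else 0)
        = (fun i => if v i ∈ ω then (1:ℝ≥0∞) else 0) (f j) := by
      intro j
      rw [Nat.cast_one, one_mul]
      exact if_congr (hiff j) rfl rfl
    rw [Finset.sum_congr rfl (fun j _ => hL j)]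
    rw [← Finset.sum_fiberwise Finset.univ f (fun j => (fun i => if v i ∈ ω then (1:ℝ≥0∞) else 0) (f j))]
    apply Finset.sum_congr rfl
    intro i _
    rw [Finset.sum_congr rfl (fun j hj => by rw [(Finset.mem_filter.mp hj).2] :
      ∀ j ∈ Finset.univ.filter fun j => f j = i,
        (fun i => if v i ∈ ω then (1:ℝ≥0∞) else 0) (f j)
          = (fun i => if v i ∈ ω then (1:ℝ≥0∞) else 0) i),
      Finset.sum_const, hf i, nsmul_eq_mul]
  · -- sphInterior
    intro j
    have hd : ∀ l : Fin m, l ≠ f j → ⟪x l - x (f j), u j⟫ < 0 := by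
      intro l hl
      rw [inner_sub_left]
      have h1 := hstrict j l hl
      have h2 := hxu j l
      have h3 := hxu j (f j)
      linarith
    have hnem : (Finset.univ : Finset (Fin m)).Nonempty := Finset.univ_nonempty
    set ε : ℝ := Finset.univ.inf' hnem (fun l => if l = f j then 1 else
      (-⟪x l - x (f j), u j⟫) / (‖x l - x (f j)‖ + 1)) with hε
    have hεpos : 0 < ε := by
      rw [hε, Finset.lt_inf'_iff]
      intro l _
      by_cases hl : l = f j
      · rw [if_pos hl]; norm_num
      · rw [if_neg hl]
        have h1 := hd l hl
        apply div_pos (by linarith) (by positivity)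
    refine ⟨hu j, ε, hεpos, ?_⟩
    intro y hy hdist
    refine ⟨hy, ?_⟩
    have hgen : ∀ l : Fin m, ⟪x l, y⟫ ≤ ⟪x (f j), y⟫ := by
      intro l
      by_cases hl : l = f j
      · rw [hl]
      · have hεle : ε ≤ (-⟪x l - x (f j), u j⟫) / (‖x l - x (f j)‖ + 1) := by
          have h1 := Finset.inf'_le (fun l => if l = f j then (1:ℝ) else
            (-⟪x l - x (f j), u j⟫) / (‖x l - x (f j)‖ + 1)) (Finset.mem_univ l)
          rw [if_neg hl] at h1
          rw [hε]
          exact h1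
        have hsplit : ⟪x l - x (f j), y⟫
            = ⟪x l - x (f j), u j⟫ + ⟪x l - x (f j), y - u j⟫ := by
          rw [inner_sub_right]
          ring
        have hcs : ⟪x l - x (f j), y - u j⟫ ≤ ‖x l - x (f j)‖ * ‖y - u j‖ :=
          real_inner_le_norm _ _
        have hdist' : ‖y - u j‖ < ε := by rwa [← dist_eq_norm]
        have h5 : ‖y - u j‖ * (‖x l - x (f j)‖ + 1) < -⟪x l - x (f j), u j⟫ := by
          have h6 : ‖y - u j‖ < (-⟪x l - x (f j), u j⟫) / (‖x l - x (f j)‖ + 1) :=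
            lt_of_lt_of_le hdist' hεle
          rwa [lt_div_iff₀ (by positivity)] at h6
        have hfin : ⟪x l - x (f j), y⟫ < 0 := by
          nlinarith [norm_nonneg (y - u j), norm_nonneg (x l - x (f j))]
        rw [inner_sub_left] at hfin
        linarith
    intro p hp
    have hsub : Set.range x ⊆ {q : Euc n | ⟪q, y⟫ ≤ ⟪x (f j), y⟫} := by
      rintro _ ⟨l, rfl⟩
      exact hgen l
    have h7 := convexHull_min hsub (convex_halfSpace_le (hlin' y) _) hp
    rw [inner_sub_left]
    have h8 : ⟪p, y⟫ ≤ ⟪x (f j), y⟫ := h7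
    linarith

/-- If the assignment functional has a unique maximizer `f` in `𝔽`, then the
Discrete Gauss Image problem has a polytope solution realizing `f` as its solution function. -/

theorem stmt0 (n m k : ℕ) (hn : 1 ≤ n)
    (v : Fin m → Euc n) (u : Fin k → Euc n)
    (hv : ∀ i, v i ∈ uSphere n) (hu : ∀ j, u j ∈ uSphere n)
    (hvinj : Function.Injective v) (huinj : Function.Injective u)
    (μw : Fin m → ℕ) (hμw : ∀ i, 0 < μw i) (hk : k = ∑ i, μw i)
    (hWA : WeakAleks (discMeasN μw v) (discMeasN (fun _ : Fin k => 1) u))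
    (hNH : NotHemisphere v)
    (f : Fin k → Fin m) (hf : IsAssign μw f)
    (hmax : ∀ g : Fin k → Fin m, IsAssign μw g → g ≠ f →
      assignA u v g < assignA u v f) :
    ∃ α : Fin m → ℝ, (∀ i, 0 < α i) ∧
      (0 : Euc n) ∈ interior (convexHull ℝ (Set.range fun i => α i • v i)) ∧
      GaussRel (convexHull ℝ (Set.range fun i => α i • v i))
        (discMeasN (fun _ : Fin k => 1) u) (discMeasN μw v) ∧
      ∀ j : Fin k, u j ∈ sphInterior (normalCone
        (convexHull ℝ (Set.range fun i => α i • v i)) (α (f j) • v (f j))) := by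
  
  classical
  have hw0 : ∃ w : Euc n, w ∈ uSphere n := by
    refine ⟨EuclideanSpace.single ⟨0, hn⟩ (1:ℝ), ?_⟩
    rw [uSphere, mem_sphere_zero_iff_norm, EuclideanSpace.norm_single]
    norm_num
  have hm2 : 2 ≤ m := by
    by_contra hc
    push_neg at hc
    interval_cases m
    · obtain ⟨w, hw⟩ := hw0
      exact hNH ⟨w, hw, fun i => i.elim0⟩
    · refine hNH ⟨-v 0, ?_, ?_⟩
      · have h1 := hv 0
        rw [uSphere, mem_sphere_zero_iff_norm] at h1 ⊢
        rwa [norm_neg]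
      · intro i
        have h0 : i = 0 := Subsingleton.elim i 0
        rw [h0, inner_neg_left]
        have h2 : ⟪v 0, v 0⟫ = 1 := by
          have h3 := hv 0
          rw [uSphere, mem_sphere_zero_iff_norm] at h3
          rw [real_inner_self_eq_norm_sq, h3]; norm_num
        rw [real_inner_comm] at h2
        rw [h2]; norm_num
  have hfib : ∀ i : Fin m, ∃ j, f j = i := by
    intro i
    have h1 : 0 < (Finset.univ.filter fun j => f j = i).card := by rw [hf i]; exact hμw i
    obtain ⟨j, hj⟩ := Finset.card_pos.mp h1
    exact ⟨j, (Finset.mem_filter.mp hj).2⟩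
  have hpos : ∀ j, 0 < ⟪u j, v (f j)⟫ := by
    obtain ⟨j0, hj0⟩ := hfib ⟨0, by omega⟩
    obtain ⟨j1, hj1⟩ := hfib ⟨1, by omega⟩
    have hne01 : j0 ≠ j1 := by
      intro h
      rw [h, hj1] at hj0
      exact absurd (congrArg Fin.val hj0) (by norm_num)
    set g : Fin k → Fin m := fun j => f (Equiv.swap j0 j1 j) with hg
    have hgA : IsAssign μw g := isAssign_comp_perm μw f hf _
    have hgne : g ≠ f := by
      intro h
      have h1 := congrFun h j0
      rw [hg] at h1
      simp only [Equiv.swap_apply_left] at h1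
      rw [hj0, hj1] at h1
      exact absurd (congrArg Fin.val h1) (by norm_num)
    have hlt := hmax g hgA hgne
    intro j
    by_contra hc
    push_neg at hc
    have hbot : elog ⟪u j, v (f j)⟫ = ⊥ := by rw [elog, if_pos hc]
    have hAbot : assignA u v f = ⊥ := by
      rw [assignA, ← Finset.add_sum_erase _ _ (Finset.mem_univ j), hbot, EReal.bot_add]
    rw [hAbot] at hlt
    exact not_lt_bot hlt
  obtain ⟨α, hαpos, hstrict⟩ := exists_alpha_strict hm2 v u f μw hf hmax hpos
  obtain ⟨h1, h2, h3⟩ := geom_main hm2 v u hv hu hvinj μw f hf hμw hNH α hαpos hpos hstrict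
  exact ⟨α, hαpos, h1, h2, h3⟩
end
end

section
/- Let n ≥ 1, let v_1,…,v_m ∈ Sⁿ⁻¹ be pairwise distinct with positive integer weights μ_1,…,μ_m, and let u_1,…,u_k ∈ Sⁿ⁻¹ be pairwise distinct with k = μ_1 + … + μ_m; set μ = ∑ μ_i δ_{v_i} and λ = ∑ δ_{u_j}. If μ and λ are weak Aleksandrov related and μ is not concentrated on a closed hemisphere, then there exists an assignment function f ∈ 𝔽 such that ⟪u_j, v_{f(j)}⟫ > 0 for every j ∈ {1,…,k} (equivalently, A(f) > −∞). -/
open MeasureTheory Set RealInnerProductSpace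
open scoped ENNReal

noncomputable section

set_option maxHeartbeats 1000000

def fiberEquiv {m : ℕ} (β : Fin m → Type*) (i : Fin m) :
    {x : Σ i, β i // x.1 = i} ≃ β i where
  toFun x := cast (congrArg β x.2) x.1.2
  invFun b := ⟨⟨i, b⟩, rfl⟩
  left_inv := by rintro ⟨⟨j, b⟩, rfl⟩; rfl
  right_inv b := rfl

/-- Weak Aleksandrov relatedness (with `μ` not concentrated on a closed
hemisphere) yields an assignment function `f ∈ 𝔽` with `⟨u_j, v_{f(j)}⟩ > 0` for all `j`. -/
theorem stmt2 (n m k : ℕ) (hn : 1 ≤ n)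
    (v : Fin m → Euc n) (u : Fin k → Euc n)
    (hv : ∀ i, v i ∈ uSphere n) (hu : ∀ j, u j ∈ uSphere n)
    (hvinj : Function.Injective v) (huinj : Function.Injective u)
    (μw : Fin m → ℕ) (hμw : ∀ i, 0 < μw i) (hk : k = ∑ i, μw i)
    (hWA : WeakAleks (discMeasN μw v) (discMeasN (fun _ : Fin k => 1) u))
    (hNH : NotHemisphere v) :
    ∃ f : Fin k → Fin m, IsAssign μw f ∧ ∀ j : Fin k, 0 < ⟪u j, v (f j)⟫ := by
  classical
  -- normalize: u j has unit norm
  have hunorm : ∀ j, ‖u j‖ = 1 := fun j => by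
    have := hu j; rwa [uSphere, mem_sphere_zero_iff_norm] at this
  have hvnorm : ∀ i, ‖v i‖ = 1 := fun i => by
    have := hv i; rwa [uSphere, mem_sphere_zero_iff_norm] at this
  -- the key Hall-type counting inequality
  have key : ∀ I : Finset (Fin m), I.Nonempty →
      ∑ i ∈ I, μw i ≤ (Finset.univ.filter
        (fun j : Fin k => ∃ i ∈ I, 0 < ⟪u j, v i⟫)).card := by
    intro I hI
    set S : Set (Euc n) :=
      {x | ∃ t : Fin m → ℝ, (∀ i, 0 ≤ t i) ∧ x = ∑ i ∈ I, t i • v i} with hSdef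
    have hS_smul : ∀ c : ℝ, 0 ≤ c → ∀ x ∈ S, c • x ∈ S := by
      rintro c hc x ⟨t, ht, rfl⟩
      exact ⟨fun i => c * t i, fun i => mul_nonneg hc (ht i), by
        rw [Finset.smul_sum]; exact Finset.sum_congr rfl fun i _ => smul_smul c (t i) (v i)⟩
    have hS_add : ∀ x ∈ S, ∀ y ∈ S, x + y ∈ S := by
      rintro x ⟨t, ht, rfl⟩ y ⟨s, hs, rfl⟩
      exact ⟨fun i => t i + s i, fun i => add_nonneg (ht i) (hs i), by
        rw [← Finset.sum_add_distrib]
        exact Finset.sum_congr rfl fun i _ => (add_smul (t i) (s i) (v i)).symm⟩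
    have hS_conv : Convex ℝ S := fun x hx y hy a b ha hb _ =>
      hS_add _ (hS_smul a ha x hx) _ (hS_smul b hb y hy)
    have hS_mem : ∀ i ∈ I, v i ∈ S := by
      intro i hi
      refine ⟨fun i' => if i' = i then 1 else 0, fun i' => by positivity, ?_⟩
      simp only [ite_smul, one_smul, zero_smul, Finset.sum_ite_eq' I i, if_pos hi]
    set C : Set (Euc n) := closure S with hCdef
    have hC_smul : ∀ c : ℝ, 0 ≤ c → ∀ x ∈ C, c • x ∈ C := fun c hc x hx =>
      map_mem_closure (continuous_const_smul c) hx (fun y hy => hS_smul c hc y hy)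
    have hC_neg : ∀ j : Fin k, (∀ i ∈ I, ⟪u j, v i⟫ ≤ 0) → ∀ x ∈ C, ⟪x, u j⟫ ≤ 0 := by
      intro j hj x hx
      have hcl : IsClosed {y : Euc n | ⟪y, u j⟫ ≤ (0:ℝ)} :=
        isClosed_le (Continuous.inner continuous_id continuous_const) continuous_const
      have hsub : S ⊆ {y : Euc n | ⟪y, u j⟫ ≤ (0:ℝ)} := by
        rintro y ⟨t, ht, rfl⟩
        simp only [mem_setOf_eq, sum_inner, real_inner_smul_left]
        refine Finset.sum_nonpos fun i hi => mul_nonpos_of_nonneg_of_nonpos (ht i) ?_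
        rw [real_inner_comm]; exact hj i hi
      exact closure_minimal hsub hcl hx
    -- the complement count
    set J : Finset (Fin k) := Finset.univ.filter (fun j => ∀ i ∈ I, ⟪u j, v i⟫ ≤ 0) with hJdef
    have hsplit : (Finset.univ.filter (fun j : Fin k => ∃ i ∈ I, 0 < ⟪u j, v i⟫)).card
        + J.card = k := by
      have := Finset.card_filter_add_card_filter_not
        (s := (Finset.univ : Finset (Fin k)))
        (p := fun j => ∃ i ∈ I, 0 < ⟪u j, v i⟫)
      rw [Finset.card_univ, Fintype.card_fin] at this
      have hJeq : J = Finset.univ.filter (fun j => ¬ ∃ i ∈ I, 0 < ⟪u j, v i⟫) := by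
        ext j
        simp only [hJdef, Finset.mem_filter, Finset.mem_univ, true_and]
        constructor
        · rintro h ⟨i, hi, hpos⟩
          exact absurd hpos (not_lt.mpr (h i hi))
        · intro h i hi
          by_contra hc
          exact h ⟨i, hi, lt_of_not_ge hc⟩
      rw [hJeq]
      exact this
    by_cases hCu : C = univ
    · -- cone is everything: every j has a positive inner product
      have hall : ∀ j : Fin k, ∃ i ∈ I, 0 < ⟪u j, v i⟫ := by
        intro j
        by_contra hcon
        push_neg at hcon
        have := hC_neg j hcon (u j) (hCu ▸ mem_univ _)
        rw [real_inner_self_eq_norm_sq, hunorm j] at this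
        norm_num at this
      have : (Finset.univ.filter (fun j : Fin k => ∃ i ∈ I, 0 < ⟪u j, v i⟫)) = Finset.univ := by
        exact Finset.filter_true_of_mem fun j _ => hall j
      rw [this, Finset.card_univ, Fintype.card_fin, hk]
      exact Finset.sum_le_sum_of_subset (Finset.subset_univ I)
    · -- apply weak Aleksandrov
      set ω : Set (Euc n) := C ∩ uSphere n with hωdef
      obtain ⟨i0, hi0⟩ := hI
      have hvi0 : v i0 ∈ ω := ⟨subset_closure (hS_mem i0 hi0), hv i0⟩
      have hcone : coneOf ω = C := by
        ext x
        constructor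
        · rintro ⟨t, ht, u', ⟨hu'C, _⟩, rfl⟩
          exact hC_smul t ht u' hu'C
        · intro hx
          by_cases hx0 : x = 0
          · exact ⟨0, le_rfl, v i0, hvi0, by simp [hx0]⟩
          · have hnx : (0:ℝ) < ‖x‖ := norm_pos_iff.mpr hx0
            refine ⟨‖x‖, le_of_lt hnx, ‖x‖⁻¹ • x,
              ⟨hC_smul _ (inv_nonneg.mpr hnx.le) x hx, ?_⟩, ?_⟩
            · rw [uSphere, mem_sphere_zero_iff_norm, norm_smul, norm_inv, norm_norm,
                inv_mul_cancel₀ hnx.ne']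
            · rw [smul_smul, mul_inv_cancel₀ hnx.ne', one_smul]
      have hωcompact : IsCompact ω := (isCompact_sphere (0 : Euc n) 1).inter_left isClosed_closure
      have hωsph : SphConvex ω :=
        ⟨inter_subset_right, ⟨v i0, 1, zero_le_one, v i0, hvi0, (one_smul ℝ _).symm⟩,
          hcone ▸ hS_conv.closure, hcone ▸ hCu⟩
      have hωmeas : MeasurableSet ω :=
        (isClosed_closure.inter Metric.isClosed_sphere).measurableSet
      have hpolarmeas : MeasurableSet (polarSet ω) := by
        have : polarSet ω = uSphere n ∩ ⋂ x ∈ ω, {w : Euc n | ⟪x, w⟫ ≤ 0} := by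
          ext w
          simp only [polarSet, mem_sep_iff, mem_inter_iff, mem_iInter, mem_setOf_eq]
        rw [this]
        exact (Metric.isClosed_sphere.inter (isClosed_biInter fun x _ =>
          isClosed_le (Continuous.inner continuous_const continuous_id) continuous_const)).measurableSet
      have hsphmeas : MeasurableSet (uSphere n) := Metric.isClosed_sphere.measurableSet
      -- μ(sphere) = k
      have hterm : ∀ (s : Set (Euc n)), MeasurableSet s → ∀ (c : ℝ≥0∞) (x : Euc n),
          (c • Measure.dirac x) s = if x ∈ s then c else 0 := by
        intro s hs c x
        rw [Measure.smul_apply, Measure.dirac_apply' _ hs]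
        by_cases hx : x ∈ s
        · rw [indicator_of_mem hx, Pi.one_apply, if_pos hx, smul_eq_mul, mul_one]
        · rw [indicator_of_notMem hx, if_neg hx, smul_eq_mul, mul_zero]
      have hmuS : discMeasN μw v (uSphere n) = (k : ℝ≥0∞) := by
        rw [discMeasN, Measure.finset_sum_apply,
          Finset.sum_congr rfl (fun i _ => hterm _ hsphmeas (μw i : ℝ≥0∞) (v i)), hk]
        push_cast
        exact Finset.sum_congr rfl fun i _ => if_pos (hv i)
      -- μ(ω) ≥ ∑_{i ∈ I} μw i
      have hmuω : (∑ i ∈ I, (μw i : ℝ≥0∞)) ≤ discMeasN μw v ω := by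
        rw [discMeasN, Measure.finset_sum_apply]
        refine le_trans (le_of_eq ?_) (Finset.sum_le_sum_of_subset (Finset.subset_univ I))
        refine Finset.sum_congr rfl fun i hi => ?_
        rw [hterm _ hωmeas,
          if_pos (show v i ∈ ω from ⟨subset_closure (hS_mem i hi), hv i⟩)]
      -- λ(polar ω) ≥ J.card
      have hlam : (J.card : ℝ≥0∞) ≤ discMeasN (fun _ : Fin k => 1) u (polarSet ω) := by
        rw [discMeasN, Measure.finset_sum_apply,
          Finset.sum_congr rfl (fun j _ => hterm (polarSet ω) hpolarmeas
            (((1:ℕ) : ℝ≥0∞)) (u j))]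
        have hJ1 : ∀ j ∈ J, u j ∈ polarSet ω := by
          intro j hj
          rw [hJdef, Finset.mem_filter] at hj
          exact ⟨hu j, fun x hx => hC_neg j hj.2 x hx.1⟩
        calc (J.card : ℝ≥0∞) = ∑ j ∈ J, 1 := by simp
          _ = ∑ j ∈ J, (if u j ∈ polarSet ω then ((1:ℕ) : ℝ≥0∞) else 0) :=
              Finset.sum_congr rfl fun j hj => by rw [if_pos (hJ1 j hj), Nat.cast_one]
          _ ≤ ∑ j : Fin k, (if u j ∈ polarSet ω then ((1:ℕ) : ℝ≥0∞) else 0) :=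
              Finset.sum_le_sum_of_subset (Finset.subset_univ J)
      have hWA2 := hWA.2 ω hωcompact hωsph
      rw [hmuS] at hWA2
      have hfinal : (∑ i ∈ I, (μw i : ℝ≥0∞)) + (J.card : ℝ≥0∞) ≤ (k : ℝ≥0∞) :=
        le_trans (add_le_add hmuω hlam) hWA2
      have : ((∑ i ∈ I, μw i : ℕ) : ℝ≥0∞) + ((J.card : ℕ) : ℝ≥0∞) ≤ ((k:ℕ) : ℝ≥0∞) := by
        push_cast; exact hfinal
      rw [← Nat.cast_add, Nat.cast_le] at this
      omega
  -- Hall's theorem setup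
  set t : (Σ i : Fin m, Fin (μw i)) → Finset (Fin k) :=
    fun x => Finset.univ.filter (fun j => 0 < ⟪u j, v x.1⟫) with htdef
  have hHall : ∀ s : Finset (Σ i : Fin m, Fin (μw i)), s.card ≤ (s.biUnion t).card := by
    intro s
    rcases s.eq_empty_or_nonempty with rfl | hs
    · simp
    set I : Finset (Fin m) := s.image Sigma.fst with hIdef
    have hIne : I.Nonempty := hs.image _
    have h1 : s.card ≤ ∑ i ∈ I, μw i := by
      have hsub : s ⊆ I.sigma (fun _ => Finset.univ) := by
        intro x hx
        rw [Finset.mem_sigma]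
        exact ⟨Finset.mem_image_of_mem _ hx, Finset.mem_univ _⟩
      calc s.card ≤ (I.sigma (fun _ => Finset.univ)).card := Finset.card_le_card hsub
        _ = ∑ i ∈ I, μw i := by rw [Finset.card_sigma]; simp
    have h2 : s.biUnion t = I.biUnion (fun i =>
        Finset.univ.filter (fun j => 0 < ⟪u j, v i⟫)) := by
      rw [hIdef, Finset.image_biUnion]
    have h3 : I.biUnion (fun i => Finset.univ.filter (fun j => 0 < ⟪u j, v i⟫))
        = Finset.univ.filter (fun j : Fin k => ∃ i ∈ I, 0 < ⟪u j, v i⟫) := by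
      ext j; simp [Finset.mem_biUnion]
    rw [h2, h3]
    exact le_trans h1 (key I hIne)
  obtain ⟨g, hginj, hgt⟩ := (Finset.all_card_le_biUnion_card_iff_exists_injective t).mp hHall
  have hcard : Fintype.card (Σ i : Fin m, Fin (μw i)) = Fintype.card (Fin k) := by
    simp [Fintype.card_sigma, hk]
  have hgbij : Function.Bijective g :=
    (Fintype.bijective_iff_injective_and_card g).mpr ⟨hginj, hcard⟩
  set e : (Σ i : Fin m, Fin (μw i)) ≃ Fin k := Equiv.ofBijective g hgbij with hedef
  refine ⟨fun j => (e.symm j).1, ?_, ?_⟩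
  · intro i
    calc (Finset.univ.filter fun j => (e.symm j).1 = i).card
        = Fintype.card {j : Fin k // (e.symm j).1 = i} := (Fintype.card_subtype _).symm
      _ = Fintype.card (Fin (μw i)) := Fintype.card_congr
          ((e.symm.subtypeEquiv (fun j => Iff.rfl)).trans (fiberEquiv (fun i => Fin (μw i)) i))
      _ = μw i := Fintype.card_fin _
  · intro j
    have := hgt (e.symm j)
    rw [htdef] at this
    simp only [Finset.mem_filter] at this
    have hej : g (e.symm j) = j := e.apply_symm_apply j
    rw [hej] at this
    exact this.2
end
end

section
/- Let n ≥ 1 and let μ = ∑_{i=1}^m μ_i δ_{v_i} and λ = ∑_{j=1}^k λ_j δ_{u_j} be discrete measures on the unit sphere Sⁿ⁻¹ of ℝⁿ (pairwise distinct v_i, pairwise distinct u_j, positive real weights) with μ(Sⁿ⁻¹) = λ(Sⁿ⁻¹). Then the following are equivalent: (a) for every compact spherically convex ω ⊆ Sⁿ⁻¹, μ(ω) + λ(ω*) ≤ μ(Sⁿ⁻¹); (b) for every compact spherically convex ω ⊆ Sⁿ⁻¹, μ(ω) ≤ λ(ω_{π/2}); (c) for every compact spherically convex ω ⊆ Sⁿ⁻¹,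 λ(ω) ≤ μ(ω_{π/2}). -/
open MeasureTheory Set RealInnerProductSpace
open scoped ENNReal

noncomputable section

-- basic facts
lemma mem_sphere_norm {n : ℕ} {x : Euc n} (hx : x ∈ uSphere n) : ‖x‖ = 1 := by
  simpa [uSphere] using hx

lemma discMeasR_ne_top {n m : ℕ} (μw : Fin m → ℝ) (v : Fin m → Euc n) (s : Set (Euc n)) :
    discMeasR μw v s ≠ ⊤ := by
  rw [discMeasR, Measure.finset_sum_apply]
  refine (ENNReal.sum_lt_top.2 fun i _ => ?_).ne
  rw [Measure.smul_apply, smul_eq_mul]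
  calc ENNReal.ofReal (μw i) * Measure.dirac (v i) s
      ≤ ENNReal.ofReal (μw i) * 1 := by
        gcongr
        rw [Measure.dirac_apply]
        exact Set.indicator_apply_le' (fun _ => le_rfl) (fun _ => zero_le_one)
    _ < ⊤ := by simp [ENNReal.ofReal_lt_top]

lemma discMeasR_mono {n m : ℕ} (μw : Fin m → ℝ) (v : Fin m → Euc n) {s t : Set (Euc n)}
    (h : s ⊆ t) : discMeasR μw v s ≤ discMeasR μw v t := measure_mono h

lemma polar_subset_sphere {n : ℕ} (ω : Set (Euc n)) : polarSet ω ⊆ uSphere n :=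
  fun _ h => h.1

lemma polar_isClosed {n : ℕ} (ω : Set (Euc n)) : IsClosed (polarSet ω) := by
  have : polarSet ω = uSphere n ∩ ⋂ u ∈ ω, {w : Euc n | ⟪u, w⟫ ≤ 0} := by
    ext w; simp [polarSet]
  rw [this]
  exact (Metric.isClosed_sphere).inter (isClosed_biInter fun u _ =>
    isClosed_le (Continuous.inner continuous_const continuous_id) continuous_const)

lemma outerPar_half {n : ℕ} (ω : Set (Euc n)) :
    outerPar ω (Real.pi / 2) = uSphere n \ polarSet ω := by
  ext w
  simp only [outerPar, polarSet, Real.cos_pi_div_two, mem_setOf_eq, mem_diff, mem_sep_iff]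
  constructor
  · rintro ⟨hw, u, hu, hlt⟩
    exact ⟨hw, fun h => absurd (h.2 u hu) (not_le.2 hlt)⟩
  · rintro ⟨hw, h⟩
    refine ⟨hw, ?_⟩
    by_contra hc
    push_neg at hc
    exact h ⟨hw, hc⟩

lemma measure_split {n : ℕ} (lam : Measure (Euc n)) (ω : Set (Euc n)) :
    lam (polarSet ω) + lam (outerPar ω (Real.pi / 2)) = lam (uSphere n) := by
  rw [outerPar_half]
  have h := measure_inter_add_diff (μ := lam) (uSphere n) (polar_isClosed ω).measurableSet
  rwa [Set.inter_eq_self_of_subset_right (polar_subset_sphere ω)] at h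

-- cone facts
lemma zero_mem_coneOf {n : ℕ} {ω : Set (Euc n)} (h : ω.Nonempty) : (0 : Euc n) ∈ coneOf ω := by
  obtain ⟨u, hu⟩ := h
  exact ⟨0, le_refl 0, u, hu, (zero_smul ℝ u).symm⟩

lemma omega_nonempty {n : ℕ} {ω : Set (Euc n)} (h : (coneOf ω).Nonempty) : ω.Nonempty := by
  obtain ⟨x, t, _, u, hu, _⟩ := h
  exact ⟨u, hu⟩

lemma smul_mem_coneOf {n : ℕ} {ω : Set (Euc n)} {t : ℝ} (ht : 0 ≤ t) {x : Euc n}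
    (hx : x ∈ coneOf ω) : t • x ∈ coneOf ω := by
  obtain ⟨s, hs, u, hu, rfl⟩ := hx
  exact ⟨t * s, mul_nonneg ht hs, u, hu, (mul_smul t s u).symm⟩

lemma coneOf_isClosed {n : ℕ} {ω : Set (Euc n)} (hsub : ω ⊆ uSphere n)
    (hc : IsCompact ω) (hne : ω.Nonempty) : IsClosed (coneOf ω) := by
  rw [← isOpen_compl_iff]
  have heq : (coneOf ω)ᶜ = {x : Euc n | x ≠ 0} ∩ (fun x : Euc n => ‖x‖⁻¹ • x) ⁻¹' ωᶜ := by
    ext x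
    simp only [mem_compl_iff, mem_inter_iff, mem_setOf_eq, mem_preimage]
    constructor
    · intro hx
      have hx0 : x ≠ 0 := fun h => hx (h ▸ zero_mem_coneOf hne)
      refine ⟨hx0, fun hmem => hx ?_⟩
      exact ⟨‖x‖, norm_nonneg x, _, hmem, by
        rw [smul_smul, mul_inv_cancel₀ (norm_ne_zero_iff.2 hx0), one_smul]⟩
    · rintro ⟨hx0, hmem⟩ ⟨t, ht, u, hu, rfl⟩
      have ht0 : t ≠ 0 := by rintro rfl; exact hx0 (zero_smul ℝ u)
      have hnu : ‖u‖ = 1 := mem_sphere_norm (hsub hu)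
      have : ‖t • u‖ = t := by rw [norm_smul, hnu, mul_one, Real.norm_eq_abs, abs_of_nonneg ht]
      rw [this, smul_smul, inv_mul_cancel₀ ht0, one_smul] at hmem
      exact hmem hu
  rw [heq]
  exact ContinuousOn.isOpen_inter_preimage
    (((continuous_norm.continuousOn).inv₀ fun x hx => norm_ne_zero_iff.2 hx).smul
      continuous_id.continuousOn) isOpen_ne hc.isClosed.isOpen_compl

lemma polar_nonempty {n : ℕ} {ω : Set (Euc n)} (hc : IsCompact ω) (hω : SphConvex ω) :
    (polarSet ω).Nonempty := by
  obtain ⟨hsub, hne, hconv, hneq⟩ := hω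
  have hωne : ω.Nonempty := omega_nonempty hne
  have hcl : IsClosed (coneOf ω) := coneOf_isClosed hsub hc hωne
  obtain ⟨z, hz⟩ : ∃ z, z ∉ coneOf ω := by
    by_contra h; push_neg at h; exact hneq (eq_univ_of_forall h)
  obtain ⟨f, c, hfc, hcz⟩ := geometric_hahn_banach_closed_point hconv hcl hz
  have h0c : 0 < c := by
    have := hfc 0 (zero_mem_coneOf hωne)
    simpa using this
  have hfle : ∀ a ∈ coneOf ω, f a ≤ 0 := by
    intro a ha
    by_contra h
    push_neg at h
    have ht : (0:ℝ) ≤ (c + 1) / f a := div_nonneg (by linarith) h.le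
    have := hfc _ (smul_mem_coneOf ht ha)
    rw [ContinuousLinearMap.map_smul, smul_eq_mul, div_mul_cancel₀ _ h.ne'] at this
    linarith
  set w₀ := (InnerProductSpace.toDual ℝ (Euc n)).symm f with hw₀
  have hinner : ∀ x, ⟪w₀, x⟫ = f x := fun x => InnerProductSpace.toDual_symm_apply
  have hw₀0 : w₀ ≠ 0 := by
    intro h
    have := hinner z
    rw [h, inner_zero_left] at this
    linarith
  refine ⟨‖w₀‖⁻¹ • w₀, ?_, ?_⟩
  · simp only [uSphere, Metric.mem_sphere, dist_zero_right, norm_smul, norm_inv, norm_norm]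
    rw [inv_mul_cancel₀ (norm_ne_zero_iff.2 hw₀0)]
  · intro u hu
    have hmem : u ∈ coneOf ω := ⟨1, zero_le_one, u, hu, (one_smul ℝ u).symm⟩
    have : ⟪w₀, u⟫ ≤ 0 := (hinner u) ▸ hfle u hmem
    rw [real_inner_smul_right, real_inner_comm]
    exact mul_nonpos_of_nonneg_of_nonpos (inv_nonneg.2 (norm_nonneg _)) this

lemma coneOf_polar {n : ℕ} {ω : Set (Euc n)} (hne : (polarSet ω).Nonempty) :
    coneOf (polarSet ω) = {x : Euc n | ∀ u ∈ ω, ⟪u, x⟫ ≤ 0} := by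
  ext x
  constructor
  · rintro ⟨t, ht, w, hw, rfl⟩ u hu
    rw [real_inner_smul_right]
    exact mul_nonpos_of_nonneg_of_nonpos ht (hw.2 u hu)
  · intro hx
    by_cases hx0 : x = 0
    · obtain ⟨w, hw⟩ := hne
      exact ⟨0, le_refl 0, w, hw, by rw [hx0, zero_smul]⟩
    · refine ⟨‖x‖, norm_nonneg x, ‖x‖⁻¹ • x, ⟨?_, ?_⟩, ?_⟩
      · simp only [uSphere, Metric.mem_sphere, dist_zero_right, norm_smul, norm_inv, norm_norm]
        rw [inv_mul_cancel₀ (norm_ne_zero_iff.2 hx0)]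
      · intro u hu
        rw [real_inner_smul_right]
        exact mul_nonpos_of_nonneg_of_nonpos (inv_nonneg.2 (norm_nonneg _)) (hx u hu)
      · rw [smul_smul, mul_inv_cancel₀ (norm_ne_zero_iff.2 hx0), one_smul]

lemma polar_sphConvex {n : ℕ} {ω : Set (Euc n)} (hc : IsCompact ω) (hω : SphConvex ω) :
    SphConvex (polarSet ω) := by
  have hne := polar_nonempty hc hω
  have hcone := coneOf_polar (ω := ω) hne
  obtain ⟨u₀, hu₀⟩ := omega_nonempty hω.2.1
  refine ⟨polar_subset_sphere ω, ⟨0, zero_mem_coneOf hne⟩, ?_, ?_⟩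
  · rw [hcone]
    have heq : {x : Euc n | ∀ u ∈ ω, ⟪u, x⟫ ≤ 0} = ⋂ u ∈ ω, {x : Euc n | ⟪u, x⟫ ≤ 0} := by
      ext x; simp
    rw [heq]
    exact convex_iInter₂ fun u _ => convex_halfSpace_le
      ⟨fun a b => inner_add_right u a b, fun c a => real_inner_smul_right u a c⟩ 0
  · rw [hcone]
    intro h
    have : u₀ ∈ {x : Euc n | ∀ u ∈ ω, ⟪u, x⟫ ≤ 0} := h ▸ mem_univ u₀
    have h1 : ⟪u₀, u₀⟫ ≤ 0 := this u₀ hu₀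
    have h2 : ‖u₀‖ = 1 := mem_sphere_norm (hω.1 hu₀)
    rw [real_inner_self_eq_norm_sq, h2] at h1
    norm_num at h1

lemma polar_compact {n : ℕ} (ω : Set (Euc n)) : IsCompact (polarSet ω) :=
  (isCompact_sphere (0 : Euc n) 1).of_isClosed_subset (polar_isClosed ω) (polar_subset_sphere ω)

lemma subset_polar_polar {n : ℕ} {ω : Set (Euc n)} (hsub : ω ⊆ uSphere n) :
    ω ⊆ polarSet (polarSet ω) := by
  intro u hu
  exact ⟨hsub hu, fun w hw => by rw [real_inner_comm]; exact hw.2 u hu⟩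

lemma aleks_iff_outer {n m k : ℕ} (μw : Fin m → ℝ) (v : Fin m → Euc n)
    (lw : Fin k → ℝ) (u : Fin k → Euc n)
    (heq : discMeasR μw v (uSphere n) = discMeasR lw u (uSphere n)) :
    (∀ ω : Set (Euc n), IsCompact ω → SphConvex ω →
        discMeasR μw v ω + discMeasR lw u (polarSet ω) ≤ discMeasR μw v (uSphere n)) ↔
    (∀ ω : Set (Euc n), IsCompact ω → SphConvex ω →
        discMeasR μw v ω ≤ discMeasR lw u (outerPar ω (Real.pi / 2))) := by
  constructor
  · intro h ω hc hs
    have h1 := h ω hc hs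
    rw [heq, ← measure_split (discMeasR lw u) ω] at h1
    rw [← ENNReal.add_le_add_iff_right (discMeasR_ne_top lw u (polarSet ω))]
    calc discMeasR μw v ω + discMeasR lw u (polarSet ω)
        ≤ discMeasR lw u (polarSet ω) + discMeasR lw u (outerPar ω (Real.pi / 2)) := h1
      _ = discMeasR lw u (outerPar ω (Real.pi / 2)) + discMeasR lw u (polarSet ω) := add_comm _ _
  · intro h ω hc hs
    have h1 := h ω hc hs
    rw [heq, ← measure_split (discMeasR lw u) ω]
    calc discMeasR μw v ω + discMeasR lw u (polarSet ω)
        ≤ discMeasR lw u (outerPar ω (Real.pi / 2)) + discMeasR lw u (polarSet ω) :=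
          add_le_add h1 (le_refl _)
      _ = discMeasR lw u (polarSet ω) + discMeasR lw u (outerPar ω (Real.pi / 2)) := add_comm _ _

lemma aleks_swap {n m k : ℕ} (μw : Fin m → ℝ) (v : Fin m → Euc n)
    (lw : Fin k → ℝ) (u : Fin k → Euc n)
    (heq : discMeasR μw v (uSphere n) = discMeasR lw u (uSphere n))
    (h : ∀ ω : Set (Euc n), IsCompact ω → SphConvex ω →
        discMeasR μw v ω + discMeasR lw u (polarSet ω) ≤ discMeasR μw v (uSphere n)) :
    ∀ ω : Set (Euc n), IsCompact ω → SphConvex ω →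
        discMeasR lw u ω + discMeasR μw v (polarSet ω) ≤ discMeasR lw u (uSphere n) := by
  intro ω hc hs
  have h1 := h (polarSet ω) (polar_compact ω) (polar_sphConvex hc hs)
  have h2 : discMeasR lw u ω ≤ discMeasR lw u (polarSet (polarSet ω)) :=
    measure_mono (subset_polar_polar hs.1)
  calc discMeasR lw u ω + discMeasR μw v (polarSet ω)
      ≤ discMeasR lw u (polarSet (polarSet ω)) + discMeasR μw v (polarSet ω) :=
        add_le_add h2 (le_refl _)
    _ = discMeasR μw v (polarSet ω) + discMeasR lw u (polarSet (polarSet ω)) := add_comm _ _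
    _ ≤ discMeasR μw v (uSphere n) := h1
    _ = discMeasR lw u (uSphere n) := heq


/-- For discrete measures with equal total mass, the weak Aleksandrov
condition `μ(ω) + λ(ω*) ≤ μ(S)` is equivalent to `μ(ω) ≤ λ(ω_{π/2})`, and also to
`λ(ω) ≤ μ(ω_{π/2})`. -/
theorem stmt4 (n m k : ℕ) (hn : 1 ≤ n)
    (v : Fin m → Euc n) (u : Fin k → Euc n)
    (hv : ∀ i, v i ∈ uSphere n) (hu : ∀ j, u j ∈ uSphere n)
    (hvinj : Function.Injective v) (huinj : Function.Injective u)
    (μw : Fin m → ℝ) (lw : Fin k → ℝ) (hμw : ∀ i, 0 < μw i) (hlw : ∀ j, 0 < lw j)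
    (heq : discMeasR μw v (uSphere n) = discMeasR lw u (uSphere n)) :
    ((∀ ω : Set (Euc n), IsCompact ω → SphConvex ω →
        discMeasR μw v ω + discMeasR lw u (polarSet ω) ≤ discMeasR μw v (uSphere n)) ↔
     (∀ ω : Set (Euc n), IsCompact ω → SphConvex ω →
        discMeasR μw v ω ≤ discMeasR lw u (outerPar ω (Real.pi / 2)))) ∧
    ((∀ ω : Set (Euc n), IsCompact ω → SphConvex ω →
        discMeasR μw v ω ≤ discMeasR lw u (outerPar ω (Real.pi / 2))) ↔
     (∀ ω : Set (Euc n), IsCompact ω → SphConvex ω →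
        discMeasR lw u ω ≤ discMeasR μw v (outerPar ω (Real.pi / 2)))) := by
  refine ⟨aleks_iff_outer μw v lw u heq, ?_⟩
  rw [← aleks_iff_outer μw v lw u heq, ← aleks_iff_outer lw u μw v heq.symm]
  exact ⟨aleks_swap μw v lw u heq, aleks_swap lw u μw v heq.symm⟩
end
end

section
/- Let n ≥ 1, let μ and λ be finite Borel measures on the unit sphere Sⁿ⁻¹ of ℝⁿ, and let K ∈ 𝒦ⁿ₀ be such that μ = λ(K,·). Then μ(Sⁿ⁻¹) = λ(Sⁿ⁻¹), and there exists α with 0 < α < π/2 such that for every compact spherically convex set ω ⊆ Sⁿ⁻¹, μ(ω) ≤ λ(ω_{π/2 − α}). -/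
open MeasureTheory Set RealInnerProductSpace
open scoped ENNReal

noncomputable section

section Aux

variable {n : ℕ}

lemma normalCone_subset_sphere {K x : Set (Euc n)} : True := trivial

lemma mem_uSphere_iff {x : Euc n} : x ∈ uSphere n ↔ ‖x‖ = 1 := by
  simp [uSphere, mem_sphere_zero_iff_norm]

/-- Basic bounds for the radial function. -/
lemma radialFn_bounds {K : Set (Euc n)} {r R : ℝ} (hr : 0 < r)
    (hrK : Metric.closedBall (0 : Euc n) r ⊆ K) (hRK : K ⊆ Metric.closedBall 0 R)
    {u : Euc n} (hu : u ∈ uSphere n) :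
    r ≤ radialFn K u ∧ radialFn K u ≤ R := by
  have hun : ‖u‖ = 1 := mem_uSphere_iff.1 hu
  have hmem : r ∈ {t : ℝ | 0 < t ∧ t • u ∈ K} := by
    refine ⟨hr, hrK ?_⟩
    simp [Metric.mem_closedBall, dist_eq_norm, norm_smul, hun, abs_of_pos hr]
  have hub : ∀ t ∈ {t : ℝ | 0 < t ∧ t • u ∈ K}, t ≤ R := by
    rintro t ⟨ht, htK⟩
    have := hRK htK
    simp only [Metric.mem_closedBall, dist_eq_norm, sub_zero, norm_smul, hun,
      mul_one] at this
    calc t ≤ |t| := le_abs_self t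
    _ ≤ R := by simpa using this
  constructor
  · exact le_csSup ⟨R, fun t ht => hub t ht⟩ hmem
  · exact csSup_le ⟨r, hmem⟩ hub

/-- The key angle bound: outer normals at the radial point of `u` make inner
product at least `r / R` with `u`. -/
lemma inner_ge_of_mem_normalCone {K : Set (Euc n)} {r R : ℝ} (hr : 0 < r)
    (hrK : Metric.closedBall (0 : Euc n) r ⊆ K) (hRK : K ⊆ Metric.closedBall 0 R)
    {u w : Euc n} (hu : u ∈ uSphere n) (hw : w ∈ normalCone K (radialFn K u • u)) :
    r / R ≤ ⟪u, w⟫ := by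
  obtain ⟨hρr, hρR⟩ := radialFn_bounds hr hrK hRK hu
  have hρpos : 0 < radialFn K u := lt_of_lt_of_le hr hρr
  have hRpos : 0 < R := lt_of_lt_of_le hρpos hρR
  obtain ⟨hwS, hwN⟩ := hw
  have hwn : ‖w‖ = 1 := mem_uSphere_iff.1 hwS
  -- `r • w ∈ K`
  have hrw : r • w ∈ K := by
    refine hrK ?_
    simp [Metric.mem_closedBall, dist_eq_norm, norm_smul, hwn, abs_of_pos hr]
  have h0 := hwN (r • w) hrw
  rw [inner_sub_left, sub_nonpos, real_inner_smul_left, real_inner_smul_left,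
    real_inner_self_eq_norm_sq, hwn] at h0
  have h1 : r ≤ radialFn K u * ⟪u, w⟫ := by simpa using h0
  have huw : 0 ≤ ⟪u, w⟫ := by
    by_contra h
    push_neg at h
    nlinarith
  have h2 : radialFn K u * ⟪u, w⟫ ≤ R * ⟪u, w⟫ :=
    mul_le_mul_of_nonneg_right hρR huw
  rw [div_le_iff₀ hRpos]
  nlinarith

/-- Every unit vector lies in the Gauss image of the whole sphere. -/
lemma sphere_subset_gaussImage {K : Set (Euc n)} {r R : ℝ} (hr : 0 < r)
    (hrK : Metric.closedBall (0 : Euc n) r ⊆ K) (hRK : K ⊆ Metric.closedBall 0 R)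
    (hKcpt : IsCompact K) :
    uSphere n ⊆ gaussImage K (uSphere n) := by
  intro w hw
  have hwn : ‖w‖ = 1 := mem_uSphere_iff.1 hw
  have hKne : K.Nonempty := ⟨0, hrK (by simp [Metric.mem_closedBall, hr.le])⟩
  have hcont : ContinuousOn (fun x : Euc n => ⟪x, w⟫) K :=
    (continuous_id.inner continuous_const).continuousOn
  obtain ⟨x, hxK, hxmax⟩ := hKcpt.exists_isMaxOn hKne hcont
  have hxmax' : ∀ y ∈ K, ⟪y, w⟫ ≤ ⟪x, w⟫ := fun y hy => hxmax hy
  have hrw : r • w ∈ K := by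
    refine hrK ?_
    simp [Metric.mem_closedBall, dist_eq_norm, norm_smul, hwn, abs_of_pos hr]
  have hxw : r ≤ ⟪x, w⟫ := by
    have := hxmax' (r • w) hrw
    rw [real_inner_smul_left, real_inner_self_eq_norm_sq, hwn] at this
    simpa using this
  have hxwpos : 0 < ⟪x, w⟫ := lt_of_lt_of_le hr hxw
  have hxnorm : 0 < ‖x‖ := by
    rcases eq_or_ne x 0 with h | h
    · simp [h] at hxwpos
    · exact norm_pos_iff.2 h
  set u : Euc n := ‖x‖⁻¹ • x with hu_def
  have huS : u ∈ uSphere n := by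
    rw [mem_uSphere_iff, hu_def, norm_smul, norm_inv, norm_norm,
      inv_mul_cancel₀ hxnorm.ne']
  have hxu : ‖x‖ • u = x := by
    rw [hu_def, smul_smul, mul_inv_cancel₀ hxnorm.ne', one_smul]
  have huw : ⟪u, w⟫ = ‖x‖⁻¹ * ⟪x, w⟫ := by
    rw [hu_def, real_inner_smul_left]
  have huwpos : 0 < ⟪u, w⟫ := by
    rw [huw]; positivity
  have hρ : radialFn K u = ‖x‖ := by
    apply le_antisymm
    · apply csSup_le ⟨‖x‖, Set.mem_setOf.2 ⟨hxnorm, by rwa [hxu]⟩⟩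
      rintro t ⟨ht, htK⟩
      have h1 := hxmax' (t • u) htK
      rw [real_inner_smul_left] at h1
      have h2 : ⟪x, w⟫ = ‖x‖ * ⟪u, w⟫ := by
        rw [huw]; field_simp
      rw [h2] at h1
      exact le_of_mul_le_mul_right h1 huwpos
    · refine le_csSup ?_ ⟨hxnorm, by rwa [hxu]⟩
      refine ⟨R, ?_⟩
      rintro t ⟨ht, htK⟩
      have := hRK htK
      simp only [Metric.mem_closedBall, dist_eq_norm, sub_zero, norm_smul,
        mem_uSphere_iff.1 huS, mul_one] at this
      calc t ≤ |t| := le_abs_self t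
      _ ≤ R := by simpa using this
  refine mem_iUnion₂.2 ⟨u, huS, ?_⟩
  rw [hρ, hxu]
  exact ⟨hw, fun y hy => by rw [inner_sub_left, sub_nonpos]; exact hxmax' y hy⟩

end Aux

/-- If `μ = λ(K,·)` for a convex body `K`, then the measures have equal total
mass and satisfy a uniform weak Aleksandrov-type inequality. -/
theorem stmt5 (n : ℕ) (hn : 1 ≤ n) (mu lam : Measure (Euc n))
    [IsFiniteMeasure mu] [IsFiniteMeasure lam]
    (hmu : mu (uSphere n)ᶜ = 0) (hlam : lam (uSphere n)ᶜ = 0)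
    (K : Set (Euc n)) (hK : IsConvexBody0 K)
    (hrel : GaussRel K lam mu) :
    mu (uSphere n) = lam (uSphere n) ∧
    ∃ α : ℝ, 0 < α ∧ α < Real.pi / 2 ∧
      ∀ ω : Set (Euc n), IsCompact ω → SphConvex ω →
        mu ω ≤ lam (outerPar ω (Real.pi / 2 - α))  := by
  obtain ⟨K_cpt, K_conv, K_int⟩ := hK
  -- inner radius
  obtain ⟨ε, hε, hball⟩ := Metric.isOpen_iff.1 isOpen_interior 0 K_int
  set r := ε / 2 with hr_def
  have hrpos : 0 < r := by positivity
  have hrK : Metric.closedBall (0 : Euc n) r ⊆ K := by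
    intro x hx
    apply interior_subset (hball ?_)
    rw [Metric.mem_ball]
    rw [Metric.mem_closedBall] at hx
    linarith
  -- outer radius
  obtain ⟨R, hrR, hRK⟩ := K_cpt.isBounded.subset_closedBall_lt r 0
  have hRpos : 0 < R := lt_trans hrpos hrR
  have hSmeas : MeasurableSet (uSphere n) :=
    Metric.isClosed_sphere.measurableSet
  have hgaussS : gaussImage K (uSphere n) = uSphere n := by
    apply Subset.antisymm
    · intro w hw
      obtain ⟨_, ⟨u, rfl⟩, _, ⟨huS, rfl⟩, hwN⟩ := hw
      exact hwN.1
    · exact sphere_subset_gaussImage hrpos hrK hRK K_cpt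
  constructor
  · rw [← hrel (uSphere n) Subset.rfl hSmeas, hgaussS]
  · -- choose the angle
    have hrR' : r / R ≤ 1 := (div_le_one hRpos).2 hrR.le
    set s := r / (2 * R) with hs_def
    have hspos : 0 < s := by positivity
    have hslt : s < r / R := by
      rw [hs_def, div_lt_div_iff₀ (by positivity) hRpos]
      nlinarith
    have hs1 : s < 1 := lt_of_lt_of_le hslt hrR'
    refine ⟨Real.arcsin s, Real.arcsin_pos.2 hspos, ?_, ?_⟩
    · exact Real.arcsin_lt_pi_div_two.2 hs1
    · intro ω hωcpt hωconv
      have hωS : ω ⊆ uSphere n := hωconv.1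
      have hωm : MeasurableSet ω := hωcpt.isClosed.measurableSet
      rw [← hrel ω hωS hωm]
      apply measure_mono
      intro w hw
      obtain ⟨_, ⟨u, rfl⟩, _, ⟨huω, rfl⟩, hwN⟩ := hw
      have huS : u ∈ uSphere n := hωS huω
      refine ⟨hwN.1, u, huω, ?_⟩
      have hkey : r / R ≤ ⟪u, w⟫ := inner_ge_of_mem_normalCone hrpos hrK hRK huS hwN
      have : Real.cos (Real.pi / 2 - Real.arcsin s) = s := by
        rw [Real.cos_pi_div_two_sub, Real.sin_arcsin (by linarith) hs1.le]
      rw [this]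
      exact lt_of_lt_of_le hslt hkey
end
end

section
/- Let n ≥ 1 and let μ = ∑_{i=1}^m μ_i δ_{v_i} and λ = ∑_{j=1}^k λ_j δ_{u_j} be discrete measures on the unit sphere Sⁿ⁻¹ of ℝⁿ (pairwise distinct v_i, pairwise distinct u_j, positive real weights) that are weak Aleksandrov related. Then there exists α with 0 < α < π/2 such that for every closed set ω ⊆ Sⁿ⁻¹, μ(ω) ≤ λ(ω_{π/2 − α}). -/
open MeasureTheory Set RealInnerProductSpace
open scoped ENNReal

noncomputable section

open scoped Classical in
lemma discMeasR_apply' {n m : ℕ} (μw : Fin m → ℝ) (v : Fin m → Euc n) (A : Set (Euc n)) :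
    discMeasR μw v A =
      ∑ i ∈ Finset.univ.filter (fun i => v i ∈ A), ENNReal.ofReal (μw i) := by
  rw [discMeasR, MeasureTheory.Measure.finset_sum_apply, Finset.sum_filter]
  refine Finset.sum_congr rfl fun i _ => ?_
  rw [MeasureTheory.Measure.smul_apply, MeasureTheory.Measure.dirac_apply, smul_eq_mul]
  by_cases h : v i ∈ A <;> simp [Set.indicator, h]

/-- Weak Aleksandrov related discrete measures satisfy a uniform inequality
`μ(ω) ≤ λ(ω_{π/2-α})` over all closed subsets `ω` of the sphere. -/
theorem stmt7 (n m k : ℕ) (hn : 1 ≤ n)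
    (v : Fin m → Euc n) (u : Fin k → Euc n)
    (hv : ∀ i, v i ∈ uSphere n) (hu : ∀ j, u j ∈ uSphere n)
    (hvinj : Function.Injective v) (huinj : Function.Injective u)
    (μw : Fin m → ℝ) (lw : Fin k → ℝ) (hμw : ∀ i, 0 < μw i) (hlw : ∀ j, 0 < lw j)
    (hWA : WeakAleks (discMeasR μw v) (discMeasR lw u)) :
    ∃ α : ℝ, 0 < α ∧ α < Real.pi / 2 ∧
      ∀ ω : Set (Euc n), ω ⊆ uSphere n → IsClosed ω →
        discMeasR μw v ω ≤ discMeasR lw u (outerPar ω (Real.pi / 2 - α)) := by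
    classical
  have hnv : ∀ i, ‖v i‖ = 1 := fun i => mem_sphere_zero_iff_norm.mp (hv i)
  have hnu : ∀ j, ‖u j‖ = 1 := fun j => mem_sphere_zero_iff_norm.mp (hu j)
  -- choose the threshold c
  set F : Finset ℝ := insert 1 (((Finset.univ : Finset (Fin m × Fin k)).filter
      (fun p => 0 < ⟪v p.1, u p.2⟫)).image fun p => ⟪v p.1, u p.2⟫) with hF
  have hFne : F.Nonempty := ⟨1, Finset.mem_insert_self _ _⟩
  set c := F.min' hFne with hcdef
  have hc1 : c ≤ 1 := Finset.min'_le _ _ (Finset.mem_insert_self _ _)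
  have hc0 : 0 < c := by
    have hmem : c ∈ F := F.min'_mem hFne
    rcases Finset.mem_insert.mp hmem with h | h
    · rw [h]; exact one_pos
    · obtain ⟨p, hp, hpe⟩ := Finset.mem_image.mp h
      rw [← hpe]; exact (Finset.mem_filter.mp hp).2
  have hcmin : ∀ i j, 0 < ⟪v i, u j⟫ → c ≤ ⟪v i, u j⟫ := by
    intro i j hij
    exact Finset.min'_le _ _ (Finset.mem_insert_of_mem
      (Finset.mem_image_of_mem _ (Finset.mem_filter.mpr ⟨Finset.mem_univ (i, j), hij⟩)))
  have hsin : Real.sin (Real.arcsin (c / 2)) = c / 2 :=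
    Real.sin_arcsin (by linarith) (by linarith)
  refine ⟨Real.arcsin (c / 2), Real.arcsin_pos.mpr (by linarith), ?_, ?_⟩
  · exact Real.arcsin_lt_pi_div_two.mpr (by linarith)
  intro ω hωs hωc
  set S : Finset (Fin m) := Finset.univ.filter (fun i => v i ∈ ω) with hSdef
  set J : Finset (Fin k) := Finset.univ.filter (fun j => ∃ i ∈ S, 0 < ⟪v i, u j⟫) with hJdef
  -- total masses agree
  have hμtot : discMeasR μw v (uSphere n) = ∑ i : Fin m, ENNReal.ofReal (μw i) := by
    rw [discMeasR_apply']
    exact Finset.sum_congr (Finset.filter_true_of_mem fun i _ => hv i) fun _ _ => rfl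
  have hltot : discMeasR lw u (uSphere n) = ∑ j : Fin k, ENNReal.ofReal (lw j) := by
    rw [discMeasR_apply']
    exact Finset.sum_congr (Finset.filter_true_of_mem fun j _ => hu j) fun _ _ => rfl
  have htot : (∑ i : Fin m, ENNReal.ofReal (μw i)) = ∑ j : Fin k, ENNReal.ofReal (lw j) := by
    rw [← hμtot, ← hltot]; exact hWA.1
  -- key combinatorial inequality
  have key : (∑ i ∈ S, ENNReal.ofReal (μw i)) ≤ ∑ j ∈ J, ENNReal.ofReal (lw j) := by
    rcases S.eq_empty_or_nonempty with hSe | hSne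
    · simp [hSe]
    by_cases hP : ∃ w ∈ uSphere n, ∀ i ∈ S, ⟪v i, w⟫ ≤ 0
    · -- use weak Aleksandrov on the closed convex cone hull
      obtain ⟨w₀, hw₀s, hw₀⟩ := hP
      obtain ⟨i0, hi0⟩ := hSne
      set C : Set (Euc n) :=
        {x | ∀ w : Euc n, (∀ i ∈ S, ⟪v i, w⟫ ≤ 0) → ⟪x, w⟫ ≤ 0} with hCdef
      have hCcone : ∀ t : ℝ, 0 ≤ t → ∀ x ∈ C, t • x ∈ C := by
        intro t ht x hx w hw
        rw [real_inner_smul_left]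
        have := hx w hw
        nlinarith
      have hvC : ∀ i ∈ S, v i ∈ C := fun i hi w hw => hw i hi
      set ω' : Set (Euc n) := C ∩ uSphere n with hω'def
      have hcone : coneOf ω' = C := by
        ext x
        constructor
        · rintro ⟨t, ht, y, hy, rfl⟩
          exact hCcone t ht y hy.1
        · intro hx
          by_cases hx0 : x = 0
          · exact ⟨0, le_rfl, v i0, ⟨hvC i0 hi0, hv i0⟩, by simp [hx0]⟩
          · refine ⟨‖x‖, norm_nonneg x, ‖x‖⁻¹ • x,
              ⟨hCcone _ (inv_nonneg.mpr (norm_nonneg x)) x hx, ?_⟩, ?_⟩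
            · show ‖x‖⁻¹ • x ∈ Metric.sphere 0 1
              rw [mem_sphere_zero_iff_norm, norm_smul, norm_inv, norm_norm,
                inv_mul_cancel₀ (norm_ne_zero_iff.mpr hx0)]
            · rw [smul_smul, mul_inv_cancel₀ (norm_ne_zero_iff.mpr hx0), one_smul]
      have hCconv : Convex ℝ C := by
        intro x hx y hy a b ha hb hab
        intro w hw
        have h1 := hx w hw
        have h2 := hy w hw
        show ⟪a • x + b • y, w⟫ ≤ 0
        rw [inner_add_left, real_inner_smul_left, real_inner_smul_left]
        nlinarith
      have hCne : C ≠ univ := by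
        intro h
        have hw0C : w₀ ∈ C := h ▸ mem_univ w₀
        have h1 : ⟪w₀, w₀⟫ ≤ 0 := hw0C w₀ hw₀
        have h2 : ⟪w₀, w₀⟫ = 1 := by
          rw [real_inner_self_eq_norm_sq, mem_sphere_zero_iff_norm.mp hw₀s]; norm_num
        linarith
      have hCclosed : IsClosed C := by
        have heq : C = ⋂ w ∈ {w : Euc n | ∀ i ∈ S, ⟪v i, w⟫ ≤ 0},
            {x : Euc n | ⟪x, w⟫ ≤ 0} := by
          ext x; simp only [hCdef, mem_setOf_eq, mem_iInter]
        rw [heq]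
        exact isClosed_biInter fun w _ =>
          isClosed_le (Continuous.inner continuous_id continuous_const) continuous_const
      have hω'comp : IsCompact ω' := by
        have : IsCompact (Metric.sphere (0 : Euc n) 1) := isCompact_sphere 0 1
        exact this.inter_left hCclosed
      have hsph : SphConvex ω' := by
        refine ⟨inter_subset_right, ⟨v i0, ?_⟩, ?_, ?_⟩
        · rw [hcone]; exact hvC i0 hi0
        · rw [hcone]; exact hCconv
        · rw [hcone]; exact hCne
      have hle := hWA.2 ω' hω'comp hsph
      -- lower bounds for the two terms
      have hμle : (∑ i ∈ S, ENNReal.ofReal (μw i)) ≤ discMeasR μw v ω' := by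
        rw [discMeasR_apply']
        refine Finset.sum_le_sum_of_subset ?_
        intro i hi
        simp only [Finset.mem_filter, Finset.mem_univ, true_and]
        exact ⟨hvC i hi, hv i⟩
      have hlle : (∑ j ∈ Finset.univ \ J, ENNReal.ofReal (lw j)) ≤
          discMeasR lw u (polarSet ω') := by
        rw [discMeasR_apply']
        refine Finset.sum_le_sum_of_subset ?_
        intro j hj
        have hjJ : j ∉ J := (Finset.mem_sdiff.mp hj).2
        have hP' : ∀ i ∈ S, ⟪v i, u j⟫ ≤ 0 := by
          intro i hi
          by_contra hlt
          exact hjJ (Finset.mem_filter.mpr ⟨Finset.mem_univ j, ⟨i, hi, not_le.mp hlt⟩⟩)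
        simp only [Finset.mem_filter, Finset.mem_univ, true_and]
        exact ⟨hu j, fun x hx => hx.1 (u j) hP'⟩
      have hchain : (∑ i ∈ S, ENNReal.ofReal (μw i)) +
          (∑ j ∈ Finset.univ \ J, ENNReal.ofReal (lw j)) ≤
          (∑ j ∈ J, ENNReal.ofReal (lw j)) +
          (∑ j ∈ Finset.univ \ J, ENNReal.ofReal (lw j)) := by
        calc (∑ i ∈ S, ENNReal.ofReal (μw i)) +
            (∑ j ∈ Finset.univ \ J, ENNReal.ofReal (lw j))
            ≤ discMeasR μw v ω' + discMeasR lw u (polarSet ω') := add_le_add hμle hlle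
          _ ≤ discMeasR μw v (uSphere n) := hle
          _ = ∑ j : Fin k, ENNReal.ofReal (lw j) := by rw [hμtot, htot]
          _ = (∑ j ∈ Finset.univ \ J, ENNReal.ofReal (lw j)) +
              (∑ j ∈ J, ENNReal.ofReal (lw j)) :=
            (Finset.sum_sdiff (Finset.subset_univ J)).symm
          _ = (∑ j ∈ J, ENNReal.ofReal (lw j)) +
              (∑ j ∈ Finset.univ \ J, ENNReal.ofReal (lw j)) := add_comm _ _
      have hfin : (∑ j ∈ Finset.univ \ J, ENNReal.ofReal (lw j)) ≠ ⊤ :=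
        (ENNReal.sum_lt_top.mpr fun j _ => ENNReal.ofReal_lt_top).ne
      exact (ENNReal.add_le_add_iff_right hfin).mp hchain
    · -- no separating hemisphere: J is everything
      have hJu : J = Finset.univ := by
        refine Finset.eq_univ_iff_forall.mpr fun j => ?_
        refine Finset.mem_filter.mpr ⟨Finset.mem_univ j, ?_⟩
        by_contra h
        push_neg at h
        exact hP ⟨u j, hu j, fun i hi => h i hi⟩
      rw [hJu, ← htot]
      exact Finset.sum_le_sum_of_subset (Finset.subset_univ S)
  -- conclude
  have hμω : discMeasR μw v ω = ∑ i ∈ S, ENNReal.ofReal (μw i) := discMeasR_apply' _ _ _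
  have houter : ∀ j ∈ J, u j ∈ outerPar ω (Real.pi / 2 - Real.arcsin (c / 2)) := by
    intro j hj
    obtain ⟨i, hiS, hipos⟩ := (Finset.mem_filter.mp hj).2
    refine ⟨hu j, v i, (Finset.mem_filter.mp hiS).2, ?_⟩
    rw [Real.cos_pi_div_two_sub, hsin]
    have := hcmin i j hipos
    linarith
  have hfinal : (∑ j ∈ J, ENNReal.ofReal (lw j)) ≤
      discMeasR lw u (outerPar ω (Real.pi / 2 - Real.arcsin (c / 2))) := by
    rw [discMeasR_apply']
    refine Finset.sum_le_sum_of_subset fun j hj =>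
      Finset.mem_filter.mpr ⟨Finset.mem_univ j, houter j hj⟩
  rw [hμω]
  exact key.trans hfinal
end
end

section
/- Let n ≥ 1 and let v_1,…,v_m ∈ Sⁿ⁻¹ be pairwise distinct and u_1,…,u_m ∈ Sⁿ⁻¹ be pairwise distinct; set μ = ∑_{i=1}^m δ_{v_i} and λ = ∑_{j=1}^m δ_{u_j}. Then μ and λ are weak Aleksandrov related if and only if Hall's condition holds: for every subset S ⊆ {1,…,m}, the cardinality of S is at most the cardinality of {j ∈ {1,…,m} : ∃ i ∈ S, ⟪v_i, u_j⟫ > 0}. In particular, if μ and λ are weak Aleksandrov related, then there exists a permutation σ of {1,…,m} such that ⟪u_j, v_{σ(j)}⟫ > 0 for all j. -/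
open MeasureTheory Set RealInnerProductSpace
open scoped ENNReal

noncomputable section

attribute [local instance] Classical.propDecidable

lemma coneOf_convex {n : ℕ} {s : Set (Euc n)} (hs : Convex ℝ s) : Convex ℝ (coneOf s) := by
  rintro x ⟨t, ht, a, ha, rfl⟩ y ⟨r, hr, b, hb, rfl⟩ p q hp hq hpq
  have hpt := mul_nonneg hp ht
  have hqr := mul_nonneg hq hr
  by_cases hc : p * t + q * r = 0
  · have h1 : p * t = 0 := by nlinarith
    have h2 : q * r = 0 := by nlinarith
    refine ⟨0, le_refl 0, a, ha, ?_⟩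
    rw [smul_smul, smul_smul, h1, h2]; simp
  · set c := p * t + q * r with hcdef
    have hc0 : 0 < c := lt_of_le_of_ne (by positivity) (Ne.symm hc)
    refine ⟨c, hc0.le, (p*t/c) • a + (q*r/c) • b,
      hs ha hb (div_nonneg hpt hc0.le) (div_nonneg hqr hc0.le)
        (by rw [← add_div, div_self hc0.ne']), ?_⟩
    rw [smul_add, smul_smul, smul_smul, smul_smul, smul_smul]
    congr 2 <;> field_simp

lemma coneOf_smul_mem {n : ℕ} {s : Set (Euc n)} {x : Euc n} (hx : x ∈ coneOf s)
    {t : ℝ} (ht : 0 ≤ t) : t • x ∈ coneOf s := by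
  obtain ⟨r, hr, a, ha, rfl⟩ := hx
  exact ⟨t * r, mul_nonneg ht hr, a, ha, smul_smul t r a⟩

lemma closure_coneOf_smul_mem {n : ℕ} {s : Set (Euc n)} {x : Euc n}
    (hx : x ∈ closure (coneOf s)) {t : ℝ} (ht : 0 ≤ t) : t • x ∈ closure (coneOf s) :=
  map_mem_closure (continuous_const_smul t) hx (fun _ hy => coneOf_smul_mem hy ht)

lemma discMeasN_one_apply {n m : ℕ} (v : Fin m → Euc n) {s : Set (Euc n)}
    (hs : MeasurableSet s) :
    discMeasN (fun _ : Fin m => 1) v s = ((Finset.univ.filter fun i => v i ∈ s).card : ℝ≥0∞) := by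
  rw [discMeasN, Measure.finset_sum_apply, Finset.card_filter]
  push_cast
  refine Finset.sum_congr rfl fun i _ => ?_
  simp [Measure.dirac_apply' _ hs, Set.indicator_apply]

lemma polarSet_measurable {n : ℕ} (ω : Set (Euc n)) : MeasurableSet (polarSet ω) := by
  have : polarSet ω = (Metric.sphere (0 : Euc n) 1) ∩ ⋂ x ∈ ω, {w : Euc n | ⟪x, w⟫ ≤ 0} := by
    ext w; simp [polarSet, uSphere]
  rw [this]
  exact (Metric.isClosed_sphere.inter (isClosed_biInter fun x _ =>
    isClosed_le (continuous_const.inner continuous_id) continuous_const)).measurableSet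

lemma halfspace_closure {n : ℕ} {s : Set (Euc n)} {w : Euc n}
    (h : ∀ y ∈ s, ⟪y, w⟫ ≤ 0) :
    ∀ x ∈ closure (coneOf (convexHull ℝ s)), ⟪x, w⟫ ≤ 0 := by
  have hH : IsClosed {x : Euc n | ⟪x, w⟫ ≤ 0} :=
    isClosed_le (continuous_id.inner continuous_const) continuous_const
  have hconv : Convex ℝ {x : Euc n | ⟪x, w⟫ ≤ 0} :=
    convex_halfSpace_le ⟨fun a b => inner_add_left a b w, fun c a => real_inner_smul_left a w c⟩ 0
  have h1 : convexHull ℝ s ⊆ {x : Euc n | ⟪x, w⟫ ≤ 0} := convexHull_min h hconv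
  have h2 : coneOf (convexHull ℝ s) ⊆ {x : Euc n | ⟪x, w⟫ ≤ 0} := by
    rintro x ⟨t, ht, a, ha, rfl⟩
    have := h1 ha
    simp only [mem_setOf_eq, real_inner_smul_left] at *
    exact mul_nonpos_of_nonneg_of_nonpos ht this
  intro x hx
  exact (closure_minimal h2 hH) hx

lemma coneOf_inter_sphere {n : ℕ} (T : Set (Euc n)) {x₀ : Euc n}
    (hx₀T : x₀ ∈ T) (hx₀ : x₀ ∈ uSphere n) :
    coneOf (closure (coneOf (convexHull ℝ T)) ∩ uSphere n)
      = closure (coneOf (convexHull ℝ T)) := by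
  set D := closure (coneOf (convexHull ℝ T)) with hD
  have hx₀D : x₀ ∈ D :=
    subset_closure ⟨1, zero_le_one, x₀, subset_convexHull ℝ T hx₀T, (one_smul ℝ x₀).symm⟩
  ext x
  constructor
  · rintro ⟨t, ht, w, ⟨hwD, _⟩, rfl⟩
    exact closure_coneOf_smul_mem hwD ht
  · intro hx
    by_cases hx0 : x = 0
    · exact ⟨0, le_refl 0, x₀, ⟨hx₀D, hx₀⟩, by simp [hx0]⟩
    · have hn : (0 : ℝ) < ‖x‖ := norm_pos_iff.mpr hx0
      refine ⟨‖x‖, hn.le, ‖x‖⁻¹ • x, ⟨closure_coneOf_smul_mem hx (inv_nonneg.mpr hn.le), ?_⟩,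
        (smul_inv_smul₀ hn.ne' x).symm⟩
      rw [uSphere, mem_sphere_zero_iff_norm, norm_smul, norm_inv, norm_norm,
        inv_mul_cancel₀ hn.ne']

/-- For equal-weight discrete measures, the weak Aleksandrov condition is
equivalent to Hall's marriage condition; in particular it yields a matching permutation. -/
theorem stmt9 (n m : ℕ) (hn : 1 ≤ n)
    (v u : Fin m → Euc n)
    (hv : ∀ i, v i ∈ uSphere n) (hu : ∀ j, u j ∈ uSphere n)
    (hvinj : Function.Injective v) (huinj : Function.Injective u) :
    (WeakAleks (discMeasN (fun _ : Fin m => 1) v) (discMeasN (fun _ : Fin m => 1) u) ↔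
      ∀ S : Finset (Fin m),
        S.card ≤ (Finset.univ.filter fun j : Fin m => ∃ i ∈ S, 0 < ⟪v i, u j⟫).card) ∧
    (WeakAleks (discMeasN (fun _ : Fin m => 1) v) (discMeasN (fun _ : Fin m => 1) u) →
      ∃ σ : Equiv.Perm (Fin m), ∀ j : Fin m, 0 < ⟪u j, v (σ j)⟫) := by
  have hSphM : MeasurableSet (uSphere n) := Metric.isClosed_sphere.measurableSet
  have hμS : discMeasN (fun _ : Fin m => 1) v (uSphere n) = (m : ℝ≥0∞) := by
    rw [discMeasN_one_apply v hSphM, Finset.filter_true_of_mem (fun i _ => hv i),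
      Finset.card_univ, Fintype.card_fin]
  have hlamS : discMeasN (fun _ : Fin m => 1) u (uSphere n) = (m : ℝ≥0∞) := by
    rw [discMeasN_one_apply u hSphM, Finset.filter_true_of_mem (fun j _ => hu j),
      Finset.card_univ, Fintype.card_fin]
  have huu : ∀ j : Fin m, ⟪u j, u j⟫ = (1 : ℝ) := by
    intro j
    have := (mem_sphere_zero_iff_norm).mp (hu j)
    rw [real_inner_self_eq_norm_sq, this]; norm_num
  have fwd : WeakAleks (discMeasN (fun _ : Fin m => 1) v) (discMeasN (fun _ : Fin m => 1) u) →
      ∀ S : Finset (Fin m),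
        S.card ≤ (Finset.univ.filter fun j : Fin m => ∃ i ∈ S, 0 < ⟪v i, u j⟫).card := by
    intro h S
    rcases S.eq_empty_or_nonempty with rfl | ⟨i₀, hi₀⟩
    · simp
    by_cases hall : ∀ j : Fin m, ∃ i ∈ S, 0 < ⟪v i, u j⟫
    · rw [Finset.filter_true_of_mem (fun j _ => hall j), Finset.card_univ, Fintype.card_fin]
      simpa using S.card_le_univ
    push_neg at hall
    obtain ⟨j₀, hj₀⟩ := hall
    set T : Set (Euc n) := v '' ↑S with hT
    set D := closure (coneOf (convexHull ℝ T)) with hD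
    set ω := D ∩ uSphere n with hω
    have hTle : ∀ y ∈ T, ⟪y, u j₀⟫ ≤ 0 := by
      rintro y ⟨i, hi, rfl⟩
      exact hj₀ i hi
    have hDle := halfspace_closure hTle
    have hvD : ∀ i ∈ S, v i ∈ D := fun i hi =>
      subset_closure ⟨1, zero_le_one, v i, subset_convexHull ℝ T ⟨i, hi, rfl⟩,
        (one_smul ℝ (v i)).symm⟩
    have hcone : coneOf ω = D := coneOf_inter_sphere T ⟨i₀, hi₀, rfl⟩ (hv i₀)
    have hωcomp : IsCompact ω := (isCompact_sphere 0 1).inter_left isClosed_closure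
    have hωsph : SphConvex ω := by
      refine ⟨inter_subset_right, ⟨v i₀, 1, zero_le_one, v i₀, ⟨hvD i₀ hi₀, hv i₀⟩,
        (one_smul ℝ (v i₀)).symm⟩, ?_, ?_⟩
      · rw [hcone]; exact (coneOf_convex (convex_convexHull ℝ T)).closure
      · rw [hcone]
        intro hDuniv
        have : u j₀ ∈ D := hDuniv ▸ mem_univ _
        have := hDle _ this
        rw [huu j₀] at this; linarith
    have key := h.2 ω hωcomp hωsph
    have hωmeas : MeasurableSet ω := (isClosed_closure.inter Metric.isClosed_sphere).measurableSet
    rw [discMeasN_one_apply v hωmeas, discMeasN_one_apply u (polarSet_measurable ω), hμS] at key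
    have keyN : (Finset.univ.filter fun i => v i ∈ ω).card
        + (Finset.univ.filter fun j => u j ∈ polarSet ω).card ≤ m := by
      have key2 : ((Finset.univ.filter fun i => v i ∈ ω).card : ℝ≥0∞)
          + ((Finset.univ.filter fun j => u j ∈ polarSet ω).card : ℝ≥0∞) ≤ (m : ℝ≥0∞) := by
        convert key using 4 <;> congr 1
      exact_mod_cast key2
    have hSA : S.card ≤ (Finset.univ.filter fun i => v i ∈ ω).card :=
      Finset.card_le_card fun i hi => Finset.mem_filter.2 ⟨Finset.mem_univ _, hvD i hi, hv i⟩
    have hsplit := Finset.card_filter_add_card_filter_not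
      (s := (Finset.univ : Finset (Fin m))) (p := fun j => u j ∈ polarSet ω)
    rw [Finset.card_univ, Fintype.card_fin] at hsplit
    have hBC : (Finset.univ.filter fun j => ¬ u j ∈ polarSet ω)
        ⊆ Finset.univ.filter fun j : Fin m => ∃ i ∈ S, 0 < ⟪v i, u j⟫ := by
      intro j hj
      rw [Finset.mem_filter] at hj
      refine Finset.mem_filter.2 ⟨Finset.mem_univ _, ?_⟩
      by_contra hcon
      push_neg at hcon
      apply hj.2
      refine ⟨hu j, ?_⟩
      intro x hx
      exact halfspace_closure (by rintro y ⟨i, hi, rfl⟩; exact hcon i hi) x hx.1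
    have := Finset.card_le_card hBC
    omega
  refine ⟨⟨fwd, ?_⟩, ?_⟩
  · intro hall
    refine ⟨by rw [hμS, hlamS], ?_⟩
    intro ω hcomp hsph
    rw [discMeasN_one_apply v hcomp.isClosed.measurableSet,
      discMeasN_one_apply u (polarSet_measurable ω), hμS]
    set A := Finset.univ.filter fun i => v i ∈ ω with hA
    set B := Finset.univ.filter fun j => u j ∈ polarSet ω with hB
    set B' := Finset.univ.filter fun j : Fin m => ∃ i ∈ A, 0 < ⟪v i, u j⟫ with hB'
    have h1 : A.card ≤ B'.card := hall A
    have hdisj : Disjoint B' B := by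
      rw [Finset.disjoint_left]
      intro j hj hjB
      rw [hB', Finset.mem_filter] at hj
      obtain ⟨i, hiA, hip⟩ := hj.2
      rw [hA, Finset.mem_filter] at hiA
      rw [hB, Finset.mem_filter] at hjB
      have := hjB.2.2 (v i) hiA.2
      linarith
    have h2 : B'.card + B.card ≤ m := by
      have h3 := Finset.card_le_univ (B' ∪ B)
      rw [Finset.card_union_of_disjoint hdisj] at h3
      simpa using h3
    have : A.card + B.card ≤ m := by omega
    exact_mod_cast this
  · intro h
    have hhall := fwd h
    obtain ⟨f, hfinj, hf⟩ :=
      (Fintype.all_card_le_filter_rel_iff_exists_injective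
        (fun i j : Fin m => 0 < ⟪v i, u j⟫)).mp (fun A => by convert hhall A)
    have hbij : Function.Bijective f := Finite.injective_iff_bijective.mp hfinj
    refine ⟨(Equiv.ofBijective f hbij).symm, ?_⟩
    intro j
    have h1 := hf ((Equiv.ofBijective f hbij).symm j)
    have h2 : f ((Equiv.ofBijective f hbij).symm j) = j :=
      (Equiv.ofBijective f hbij).apply_symm_apply j
    rw [h2] at h1
    rw [real_inner_comm]
    exact h1
end
end

section
/- Let n ≥ 1, let v_1,…,v_m ∈ Sⁿ⁻¹ be pairwise distinct with positive integer weights μ_1,…,μ_m, and let u_1,…,u_k ∈ Sⁿ⁻¹ be pairwise distinct with k = μ_1 + … + μ_m; set μ = ∑ μ_i δ_{v_i} and λ = ∑ δ_{u_j}. Assume μ and λ are weak Aleksandrov related and μ is not concentrated on a closed hemisphere. Then for every assignment function f ∈ 𝔽 and every convex body K ∈ 𝒦ⁿ₀, one has (as an inequality in EReal): ∑_{i=1}^m μ_i·log ρ_K(v_i) − ∑_{j=1}^k log h_K(u_j) ≤ −A(f), where h_K(u) = sup{⟪x, u⟫ : x ∈ K} is the support function of K. -/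
open MeasureTheory Set RealInnerProductSpace
open scoped ENNReal

noncomputable section

lemma radialFn_spec {n : ℕ} {K : Set (Euc n)} (hK : IsConvexBody0 K)
    {w : Euc n} (hw : w ∈ uSphere n) :
    0 < radialFn K w ∧ radialFn K w • w ∈ K := by
  obtain ⟨hKc, _, h0⟩ := hK
  have hwn : ‖w‖ = 1 := by
    simpa [uSphere, mem_sphere_zero_iff_norm] using hw
  obtain ⟨ε, hε, hball⟩ := Metric.mem_nhds_iff.1 (mem_interior_iff_mem_nhds.1 h0)
  have hballK : Metric.ball (0 : Euc n) ε ⊆ K := hball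
  obtain ⟨R₀, hR₀⟩ := hKc.isBounded.exists_norm_le
  set R := max R₀ 0 with hR
  have hRK : ∀ x ∈ K, ‖x‖ ≤ R := fun x hx => (hR₀ x hx).trans (le_max_left _ _)
  have hmem : (ε / 2) • w ∈ K := by
    apply hballK
    simp only [Metric.mem_ball, dist_zero_right, norm_smul, hwn, mul_one,
      Real.norm_eq_abs, abs_of_pos (half_pos hε)]
    linarith
  set S : Set ℝ := {t : ℝ | 0 < t ∧ t • w ∈ K} with hS
  set S' : Set ℝ := {t : ℝ | 0 ≤ t ∧ t • w ∈ K} with hS'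
  have hSsub : S ⊆ S' := fun t ht => ⟨ht.1.le, ht.2⟩
  have hSne : S.Nonempty := ⟨ε / 2, half_pos hε, hmem⟩
  have hbdd' : BddAbove S' := by
    refine ⟨R, fun t ht => ?_⟩
    have := hRK _ ht.2
    rw [norm_smul, hwn, mul_one, Real.norm_eq_abs, abs_of_nonneg ht.1] at this
    exact this
  have hbdd : BddAbove S := hbdd'.mono hSsub
  have hSpos : 0 < sSup S := lt_of_lt_of_le (half_pos hε) (le_csSup hbdd ⟨half_pos hε, hmem⟩)
  have hclosed : IsClosed S' := by
    have h1 : IsClosed {t : ℝ | t • w ∈ K} :=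
      hKc.isClosed.preimage (continuous_id.smul continuous_const)
    have : S' = Ici (0 : ℝ) ∩ {t : ℝ | t • w ∈ K} := by
      ext t; simp [hS', and_comm, mem_Ici]
    rw [this]
    exact isClosed_Ici.inter h1
  have hS'ne : S'.Nonempty := hSne.mono hSsub
  have hmem' : sSup S' ∈ S' := hclosed.csSup_mem hS'ne hbdd'
  have heq : sSup S = sSup S' := by
    apply le_antisymm (csSup_le_csSup hbdd' hSne hSsub)
    apply csSup_le hS'ne
    intro t ht
    rcases eq_or_lt_of_le ht.1 with h | h
    · exact (h ▸ hSpos.le)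
    · exact le_csSup hbdd ⟨h, ht.2⟩
  have : radialFn K w = sSup S := rfl
  rw [this, heq]
  exact ⟨heq ▸ hSpos, hmem'.2⟩

lemma suppFn_ge {n : ℕ} {K : Set (Euc n)} (hKc : IsCompact K)
    {x : Euc n} (hx : x ∈ K) (w : Euc n) : ⟪x, w⟫ ≤ suppFn K w := by
  apply le_csSup
  · exact (hKc.image (continuous_id.inner continuous_const)).bddAbove
  · exact ⟨x, hx, rfl⟩

/-- For any assignment function `f` and any convex body `K`,
`Φ(K, μ, λ) = ∑ μ_i log ρ_K(v_i) - ∑ log h_K(u_j) ≤ -A(f)`. -/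
theorem stmt10 (n m k : ℕ) (hn : 1 ≤ n)
    (v : Fin m → Euc n) (u : Fin k → Euc n)
    (hv : ∀ i, v i ∈ uSphere n) (hu : ∀ j, u j ∈ uSphere n)
    (hvinj : Function.Injective v) (huinj : Function.Injective u)
    (μw : Fin m → ℕ) (hμw : ∀ i, 0 < μw i) (hk : k = ∑ i, μw i)
    (hWA : WeakAleks (discMeasN μw v) (discMeasN (fun _ : Fin k => 1) u))
    (hNH : NotHemisphere v)
    (f : Fin k → Fin m) (hf : IsAssign μw f)
    (K : Set (Euc n)) (hK : IsConvexBody0 K) :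
    ((∑ i : Fin m, (μw i : ℝ) * Real.log (radialFn K (v i))
        - ∑ j : Fin k, Real.log (suppFn K (u j)) : ℝ) : EReal) ≤ - assignA u v f := by
  set g : Fin k → ℝ := fun j =>
    Real.log (suppFn K (u j)) - Real.log (radialFn K (v (f j))) with hg
  -- termwise bound on the assignment functional
  have hterm : ∀ j : Fin k, elog ⟪u j, v (f j)⟫ ≤ ((g j : ℝ) : EReal) := by
    intro j
    rcases le_or_gt ⟪u j, v (f j)⟫ 0 with hc | hc
    · rw [elog, if_pos hc]; exact bot_le
    · have hcne : ¬ ⟪u j, v (f j)⟫ ≤ 0 := not_le.2 hc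
      rw [elog, if_neg hcne]
      rw [EReal.coe_le_coe_iff]
      obtain ⟨hρ, hρmem⟩ := radialFn_spec hK (hv (f j))
      set ρ := radialFn K (v (f j))
      set c := ⟪u j, v (f j)⟫
      have hKc := hK.1
      have hle : ρ * c ≤ suppFn K (u j) := by
        have := suppFn_ge hKc hρmem (u j)
        rwa [real_inner_smul_left, real_inner_comm] at this
      have hpos : 0 < ρ * c := mul_pos hρ hc
      have := Real.log_le_log hpos hle
      rw [Real.log_mul hρ.ne' hc.ne'] at this
      simp only [hg, g]
      linarith
  -- sum the bound
  have hsum : assignA u v f ≤ ((∑ j : Fin k, g j : ℝ) : EReal) := by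
    calc assignA u v f ≤ ∑ j : Fin k, ((g j : ℝ) : EReal) :=
          Finset.sum_le_sum fun j _ => hterm j
      _ = ((∑ j : Fin k, g j : ℝ) : EReal) := by
          induction (Finset.univ : Finset (Fin k)) using Finset.induction with
          | empty => simp
          | @insert a s hni ih => simp [Finset.sum_insert hni, ih, EReal.coe_add]
  -- rewrite LHS via fibers of f
  have hfib : ∑ j : Fin k, Real.log (radialFn K (v (f j)))
      = ∑ i : Fin m, (μw i : ℝ) * Real.log (radialFn K (v i)) := by
    rw [← Finset.sum_fiberwise Finset.univ f fun j => Real.log (radialFn K (v (f j)))]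
    refine Finset.sum_congr rfl fun i _ => ?_
    have : ∀ j ∈ Finset.univ.filter fun j => f j = i,
        Real.log (radialFn K (v (f j))) = Real.log (radialFn K (v i)) := by
      intro j hj
      rw [(Finset.mem_filter.1 hj).2]
    rw [Finset.sum_congr rfl this, Finset.sum_const, hf i, nsmul_eq_mul]
  have hlhs : (∑ i : Fin m, (μw i : ℝ) * Real.log (radialFn K (v i))
      - ∑ j : Fin k, Real.log (suppFn K (u j))) = -(∑ j : Fin k, g j) := by
    simp only [hg, g, Finset.sum_sub_distrib, hfib]
    ring
  rw [hlhs, EReal.coe_neg]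
  exact EReal.neg_le_neg_iff.2 hsum
end
end
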